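/- arXiv:2108.02691 — 3 statements merged into one kernel-verified Lean document; each statement's English description precedes it below -/
import Mathlib

section
/- Let a ∈ ℝ, b = (b_1,…,b_n) ∈ ℝ^n, c = (c_1,…,c_n) ∈ ℝ^n with no c_i a nonpositive integer, and let x = (x_1,…,x_n) ∈ ℝ^n satisfy |x_1| + … + |x_n| < 1. Then the multiple Lauricella series Σ_{k∈ℕ^n} (a)_{k_1+…+k_n} ∏_{i=1}^n [(b_i)_{k_i}/((c_i)_{k_i} k_i!)] x_i^{k_i} converges absolutely. -/
open Real

/-- The Pochhammer symbol `(q)_m = q (q+1) ⋯ (q+m-1)` for a real `q`. -/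
noncomputable def pochhammerR (q : ℝ) (m : ℕ) : ℝ := (ascPochhammer ℝ m).eval q

/-- The general term of the Lauricella hypergeometric series `F_A^{(n)}`. -/
noncomputable def lauricellaTerm (n : ℕ) (a : ℝ) (b c x : Fin n → ℝ) (k : Fin n → ℕ) : ℝ :=
  pochhammerR a (∑ i, k i) *
    ∏ i, pochhammerR (b i) (k i) / (pochhammerR (c i) (k i) * (Nat.factorial (k i) : ℝ)) *
      x i ^ (k i)

lemma pochR_zero (q : ℝ) : pochhammerR q 0 = 1 := by simp [pochhammerR]

lemma pochR_succ (q : ℝ) (m : ℕ) : pochhammerR q (m + 1) = pochhammerR q m * (q + m) := by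
  simp [pochhammerR, ascPochhammer_succ_eval]

lemma pochR_ne_zero {c : ℝ} (hc : ∀ j : ℕ, c ≠ -(j : ℝ)) (m : ℕ) : pochhammerR c m ≠ 0 := by
  induction m with
  | zero => simp [pochR_zero]
  | succ m ih =>
    rw [pochR_succ]
    refine mul_ne_zero ih fun h => hc m (by linarith)

lemma bounded_geom {u : ℕ → ℝ} (hu : ∀ k, 0 ≤ u k) {R : ℝ} (hR : 1 ≤ R) (K : ℕ)
    (h : ∀ k, K ≤ k → u (k + 1) ≤ R * u k) :
    ∃ C, 0 < C ∧ ∀ k, u k ≤ C * R ^ k := by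
  have hR0 : (0 : ℝ) < R := lt_of_lt_of_le one_pos hR
  set C : ℝ := (Finset.range (K + 1)).sup' (by simp) u with hCdef
  have hC : ∀ k ≤ K, u k ≤ C := fun k hk =>
    Finset.le_sup' u (Finset.mem_range.2 (Nat.lt_succ_of_le hk))
  have hC0 : 0 ≤ C := le_trans (hu 0) (hC 0 (Nat.zero_le K))
  have base : ∀ k ≤ K, u k ≤ (C + 1) * R ^ k := by
    intro k hk
    have h1 : (1 : ℝ) ≤ R ^ k := one_le_pow₀ hR
    calc u k ≤ C := hC k hk
      _ = C * 1 := by ring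
      _ ≤ (C + 1) * R ^ k := by nlinarith
  have key : ∀ d, u (K + d) ≤ (C + 1) * R ^ (K + d) := by
    intro d
    induction d with
    | zero => exact base K (le_refl K)
    | succ d ih =>
      have h2 := h (K + d) (Nat.le_add_right _ _)
      have h3 : u (K + d) ≤ (C + 1) * R ^ (K + d) := ih
      have h4 : R * u (K + d) ≤ R * ((C + 1) * R ^ (K + d)) :=
        mul_le_mul_of_nonneg_left h3 hR0.le
      calc u (K + (d + 1)) = u ((K + d) + 1) := by ring_nf
        _ ≤ R * u (K + d) := h2
        _ ≤ R * ((C + 1) * R ^ (K + d)) := h4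
        _ = (C + 1) * R ^ (K + (d + 1)) := by rw [show K + (d+1) = (K+d)+1 from rfl, pow_succ]; ring
  refine ⟨C + 1, by linarith, fun k => ?_⟩
  rcases le_or_gt k K with hk | hk
  · exact base k hk
  · have : K + (k - K) = k := Nat.add_sub_cancel' hk.le
    rw [← this]; exact key (k - K)

lemma poch_ratio_bound (b c : ℝ) (hc : ∀ j : ℕ, c ≠ -(j : ℝ)) {R : ℝ} (hR : 1 < R) :
    ∃ C, 0 < C ∧ ∀ k, |pochhammerR b k| ≤ C * R ^ k * |pochhammerR c k| := by
  obtain ⟨K, hK⟩ := exists_nat_ge (max ((|b| + R * |c|) / (R - 1)) (|c| + 1))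
  have hK1 : (|b| + R * |c|) / (R - 1) ≤ K := le_trans (le_max_left _ _) hK
  have hK2 : |c| + 1 ≤ (K : ℝ) := le_trans (le_max_right _ _) hK
  set u : ℕ → ℝ := fun k => |pochhammerR b k| / |pochhammerR c k| with hu
  have hcpos : ∀ k : ℕ, 0 < |pochhammerR c k| := fun k => abs_pos.2 (pochR_ne_zero hc k)
  have hstep : ∀ k, K ≤ k → u (k + 1) ≤ R * u k := by
    intro k hk
    have hkK : (K : ℝ) ≤ k := Nat.cast_le.2 hk
    have hck : 0 < c + k := by
      have := neg_abs_le c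
      linarith
    have hbk : |b + k| ≤ |b| + k := by
      calc |b + k| ≤ |b| + |(k : ℝ)| := abs_add_le _ _
        _ = |b| + k := by rw [Nat.abs_cast]
    have hck' : (k : ℝ) - |c| ≤ |c + k| := by
      rw [abs_of_pos hck]
      have := neg_abs_le c
      linarith
    have hratio : |b + k| ≤ R * |c + k| := by
      have h1 : |b| + k ≤ R * ((k : ℝ) - |c|) := by
        have := (div_le_iff₀ (by linarith : (0:ℝ) < R - 1)).1 (hK1.trans hkK)
        nlinarith
      have h2 : R * ((k:ℝ) - |c|) ≤ R * |c + k| := mul_le_mul_of_nonneg_left hck' (by linarith)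
      linarith
    have hexp : u (k + 1) = u k * (|b + k| / |c + k|) := by
      simp only [hu, pochR_succ, abs_mul]
      rw [div_mul_div_comm]
    rw [hexp]
    have habs : 0 < |c + k| := by rw [abs_of_pos hck]; exact hck
    have : |b + k| / |c + k| ≤ R := (div_le_iff₀ habs).2 hratio
    have hu0 : 0 ≤ u k := div_nonneg (abs_nonneg _) (abs_nonneg _)
    calc u k * (|b + k| / |c + k|) ≤ u k * R := mul_le_mul_of_nonneg_left this hu0
      _ = R * u k := mul_comm _ _
  obtain ⟨C, hC0, hC⟩ := bounded_geom (fun k => div_nonneg (abs_nonneg _) (abs_nonneg _)) hR.le K hstep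
  refine ⟨C, hC0, fun k => ?_⟩
  have := hC k
  have h2 : u k * |pochhammerR c k| ≤ C * R ^ k * |pochhammerR c k| :=
    mul_le_mul_of_nonneg_right this (abs_nonneg _)
  rwa [hu, div_mul_cancel₀ _ (hcpos k).ne'] at h2

/-- The multiple Lauricella hypergeometric series `F_A^{(n)}` converges absolutely
whenever `|x_1| + ⋯ + |x_n| < 1` and no `c_i` is a nonpositive integer. -/
theorem lauricella_summable (n : ℕ) (hn : 1 ≤ n) (a : ℝ) (b c x : Fin n → ℝ)
    (hc : ∀ i, ∀ j : ℕ, c i ≠ -(j : ℝ))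
    (hx : ∑ i, |x i| < 1) :
    Summable (fun k : Fin n → ℕ => |lauricellaTerm n a b c x k|) := by
  classical
  set s := ∑ i, |x i| with hs
  have hs0 : 0 ≤ s := Finset.sum_nonneg fun i _ => abs_nonneg _
  set R : ℝ := Real.sqrt (2 / (1 + s)) with hRdef
  have hR0 : 0 ≤ R := Real.sqrt_nonneg _
  have hR2 : R ^ 2 = 2 / (1 + s) := Real.sq_sqrt (by positivity)
  have hR2gt : 1 < R ^ 2 := by
    rw [hR2, lt_div_iff₀ (by linarith)]
    linarith
  have hR1 : 1 < R := by nlinarith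
  -- constants
  have hc1 : ∀ j : ℕ, (1 : ℝ) ≠ -(j : ℝ) := by
    intro j h
    have : (0:ℝ) ≤ (j : ℝ) := Nat.cast_nonneg j
    linarith
  obtain ⟨C0, hC00, hA⟩ := poch_ratio_bound a 1 hc1 hR1
  have hA' : ∀ m : ℕ, |pochhammerR a m| ≤ C0 * R ^ m * (m.factorial : ℝ) := by
    intro m
    have := hA m
    rwa [show pochhammerR 1 m = ((m.factorial : ℕ) : ℝ) by simp [pochhammerR],
      abs_of_nonneg (by positivity : (0:ℝ) ≤ ((m.factorial : ℕ) : ℝ))] at this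
  choose Ci hCi0 hCi using fun i => poch_ratio_bound (b i) (c i) (hc i) hR1
  set C : ℝ := C0 * ∏ i, Ci i with hCdef
  have hCpos : 0 < C := mul_pos hC00 (Finset.prod_pos fun i _ => hCi0 i)
  set y : Fin n → ℝ := fun i => R ^ 2 * |x i| with hy
  have hy0 : ∀ i, 0 ≤ y i := fun i => by positivity
  set t : ℝ := ∑ i, y i with ht
  have htval : t = R ^ 2 * s := by rw [ht, hs, Finset.mul_sum]
  have ht0 : 0 ≤ t := Finset.sum_nonneg fun i _ => hy0 i
  have ht1 : t < 1 := by
    rw [htval, hR2, div_mul_eq_mul_div, div_lt_one (by linarith)]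
    linarith
  set g : (Fin n → ℕ) → ℝ := fun k => C * (Nat.multinomial Finset.univ k : ℝ) * ∏ i, y i ^ k i
    with hg
  have hg0 : ∀ k, 0 ≤ g k := by
    intro k
    have : (0:ℝ) ≤ ∏ i, y i ^ k i := Finset.prod_nonneg fun i _ => pow_nonneg (hy0 i) _
    have h2 : (0:ℝ) ≤ (Nat.multinomial Finset.univ k : ℝ) := Nat.cast_nonneg _
    positivity
  -- the comparison
  have hbound : ∀ k, |lauricellaTerm n a b c x k| ≤ g k := by
    intro k
    set m : ℕ := ∑ i, k i with hm
    have habs : |lauricellaTerm n a b c x k| =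
        |pochhammerR a m| *
          ∏ i, |pochhammerR (b i) (k i)| / (|pochhammerR (c i) (k i)| * ((k i).factorial : ℝ)) *
            |x i| ^ (k i) := by
      rw [lauricellaTerm, abs_mul, Finset.abs_prod]
      congr 1
      refine Finset.prod_congr rfl fun i _ => ?_
      rw [abs_mul, abs_div, abs_mul, abs_pow, Nat.abs_cast]
    have hcpos : ∀ i, 0 < |pochhammerR (c i) (k i)| :=
      fun i => abs_pos.2 (pochR_ne_zero (hc i) _)
    have hfactor : ∀ i ∈ Finset.univ,
        |pochhammerR (b i) (k i)| / (|pochhammerR (c i) (k i)| * ((k i).factorial : ℝ)) *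
            |x i| ^ (k i)
          ≤ Ci i * R ^ (k i) * |x i| ^ (k i) / ((k i).factorial : ℝ) := by
      intro i _
      have hf : (0:ℝ) < ((k i).factorial : ℝ) := by positivity
      rw [div_mul_eq_mul_div, div_le_div_iff₀ (mul_pos (hcpos i) hf) hf]
      have h1 := hCi i (k i)
      have hx0 : (0:ℝ) ≤ |x i| ^ (k i) := by positivity
      nlinarith [mul_le_mul_of_nonneg_right h1 (mul_nonneg hx0 hf.le), (hcpos i).le]
    have hfac0 : ∀ i ∈ Finset.univ, (0:ℝ) ≤
        |pochhammerR (b i) (k i)| / (|pochhammerR (c i) (k i)| * ((k i).factorial : ℝ)) *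
          |x i| ^ (k i) := by
      intro i _
      positivity
    have hprod := Finset.prod_le_prod hfac0 hfactor
    have hstep : |lauricellaTerm n a b c x k| ≤
        (C0 * R ^ m * (m.factorial : ℝ)) * ∏ i, Ci i * R ^ (k i) * |x i| ^ (k i) / ((k i).factorial : ℝ) := by
      rw [habs]
      refine mul_le_mul (hA' m) hprod (Finset.prod_nonneg hfac0) (by positivity)
    refine hstep.trans_eq ?_
    -- now equality with g k
    have hF : (0:ℝ) < ∏ i, ((k i).factorial : ℝ) := Finset.prod_pos fun i _ => by positivity
    have hmult : (Nat.multinomial Finset.univ k : ℝ) * ∏ i, ((k i).factorial : ℝ) = (m.factorial : ℝ) := by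
      rw [hm]
      exact_mod_cast congrArg (Nat.cast (R := ℝ))
        (by rw [mul_comm]; exact Nat.multinomial_spec Finset.univ k)
    have hprodsplit : ∏ i, Ci i * R ^ (k i) * |x i| ^ (k i) / ((k i).factorial : ℝ) =
        (∏ i, Ci i) * R ^ m * (∏ i, |x i| ^ (k i)) / ∏ i, ((k i).factorial : ℝ) := by
      rw [Finset.prod_div_distrib, Finset.prod_mul_distrib, Finset.prod_mul_distrib,
        Finset.prod_pow_eq_pow_sum, hm]
    have hyprod : ∏ i, y i ^ k i = R ^ m * R ^ m * ∏ i, |x i| ^ (k i) := by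
      rw [hy]
      simp only [mul_pow]
      rw [Finset.prod_mul_distrib, Finset.prod_pow_eq_pow_sum, ← hm, ← pow_mul,
        two_mul, pow_add]
    rw [hprodsplit]
    simp only [hg]
    rw [hyprod, hCdef]
    rw [eq_comm, ← hmult]
    field_simp
  -- summability of the majorant
  have hgsum : Summable g := by
    refine summable_of_sum_le hg0 (fun u => ?_) (c := C * (1 - t)⁻¹)
    set M : ℕ := u.sup fun k => ∑ i, k i with hM
    have hsub : u ⊆ (Finset.range (M + 1)).biUnion fun m => Finset.piAntidiag Finset.univ m := by
      intro k hk
      refine Finset.mem_biUnion.2 ⟨∑ i, k i, Finset.mem_range.2 (Nat.lt_succ_of_le ?_), ?_⟩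
      · exact Finset.le_sup hk
      · exact Finset.mem_piAntidiag.2 ⟨rfl, fun i _ => Finset.mem_univ i⟩
    have hdisj : Set.PairwiseDisjoint ((Finset.range (M + 1) : Finset ℕ) : Set ℕ)
        fun m => Finset.piAntidiag (Finset.univ : Finset (Fin n)) m := by
      intro m₁ _ m₂ _ hne
      simp only [Finset.disjoint_left]
      intro k hk1 hk2
      exact hne ((Finset.mem_piAntidiag.1 hk1).1.symm.trans (Finset.mem_piAntidiag.1 hk2).1)
    calc ∑ k ∈ u, g k ≤ ∑ k ∈ (Finset.range (M + 1)).biUnion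
          (fun m => Finset.piAntidiag Finset.univ m), g k :=
        Finset.sum_le_sum_of_subset_of_nonneg hsub fun k _ _ => hg0 k
      _ = ∑ m ∈ Finset.range (M + 1), ∑ k ∈ Finset.piAntidiag Finset.univ m, g k :=
        Finset.sum_biUnion hdisj
      _ = ∑ m ∈ Finset.range (M + 1), C * t ^ m := by
        refine Finset.sum_congr rfl fun m _ => ?_
        rw [ht, Finset.sum_pow_eq_sum_piAntidiag, Finset.mul_sum]
        refine Finset.sum_congr rfl fun k _ => ?_
        rw [hg]
        push_cast
        ring
      _ = C * ∑ m ∈ Finset.range (M + 1), t ^ m := by rw [Finset.mul_sum]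
      _ ≤ C * (1 - t)⁻¹ := by
        refine mul_le_mul_of_nonneg_left ?_ hCpos.le
        calc ∑ m ∈ Finset.range (M + 1), t ^ m
            ≤ ∑' m : ℕ, t ^ m := Summable.sum_le_tsum _ (fun m _ => pow_nonneg ht0 m)
              (summable_geometric_of_lt_one ht0 ht1)
          _ = (1 - t)⁻¹ := tsum_geometric_of_lt_one ht0 ht1
  exact hgsum.of_nonneg_of_le (fun k => abs_nonneg _) hbound
end

section
/- Let m > 2, 1 ≤ n ≤ m, and 0 < 2α_j < 1 for j = 1,…,n; set α = α_1+…+α_n, β = (m−2)/2 + α, and γ = 2^{2β−m} Γ(β) π^{−m/2} ∏_{k=1}^n Γ(α_k)/Γ(2α_k). For x, ξ ∈ ℝ^m with x_j ≥ 0, ξ_j > 0 (j = 1,…,n) and x ≠ ξ, let r² = Σ_{i=1}^m (x_i − ξ_i)² and q(x,ξ) = γ r^{−2β} F_A^{(n)}(β, (α_1,…,α_n); (2α_1,…,2α_n); −4x_1ξ_1/r², …, −4x_nξ_n/r²). Then for each k with 1 ≤ k ≤ n and each such point with x_k = 0, the partial derivative of q(x,ξ) with respect to x_k vanishes: (∂q(x,ξ)/∂x_k)|_{x_k=0}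 = 0. -/
open MeasureTheory Real

/-- The Lauricella function `F_A` (in finitely many variables indexed by `ι`) defined
through its Euler-type integral representation. -/
noncomputable def lauricellaFA {ι : Type*} [Fintype ι] (a : ℝ) (b c x : ι → ℝ) : ℝ :=
  (∏ i, Real.Gamma (c i) / (Real.Gamma (b i) * Real.Gamma (c i - b i))) *
    ∫ u in Set.univ.pi (fun _ : ι => Set.Icc (0 : ℝ) 1),
      (∏ i, u i ^ (b i - 1) * (1 - u i) ^ (c i - b i - 1)) * (1 - ∑ i, x i * u i) ^ (-a)

lemma measurableRpowConstAux (c : ℝ) : Measurable fun x : ℝ => x ^ c := by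
  have h : (fun x : ℝ => x ^ c) = fun x =>
      if x = 0 then (0:ℝ) ^ c
      else Real.exp (Real.log x * c) * (if 0 < x then 1 else Real.cos (c * Real.pi)) := by
    funext x
    rcases lt_trichotomy x 0 with h|h|h
    · rw [if_neg h.ne, if_neg (not_lt.mpr h.le), Real.rpow_def_of_neg h]
    · simp [h]
    · rw [if_neg h.ne', if_pos h, Real.rpow_def_of_pos h, mul_one]
  rw [h]
  exact Measurable.ite (measurableSet_eq) measurable_const
    ((Real.measurable_exp.comp (Real.measurable_log.mul_const c)).mul
      (Measurable.ite (measurableSet_lt measurable_const measurable_id) measurable_const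
        measurable_const))

lemma betaIntegrableAux {a : ℝ} (h0 : 0 < a) (h1 : a < 1) :
    IntegrableOn (fun v : ℝ => v ^ (a - 1) * (1 - v) ^ (a - 1)) (Set.Icc (0:ℝ) 1) := by
  have hmeas : Measurable fun v : ℝ => v ^ (a - 1) * (1 - v) ^ (a - 1) :=
    ((measurableRpowConstAux (a-1)).comp measurable_id).mul
      ((measurableRpowConstAux (a-1)).comp (measurable_const.sub measurable_id))
  have hint1 : IntegrableOn (fun v : ℝ => v ^ (a - 1)) (Set.Icc (0:ℝ) 1) := by
    have := intervalIntegral.intervalIntegrable_rpow' (a := 0) (b := 1) (r := a - 1) (by linarith)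
    rwa [intervalIntegrable_iff_integrableOn_Icc_of_le (by norm_num)] at this
  have hint2 : IntegrableOn (fun v : ℝ => (1 - v) ^ (a - 1)) (Set.Icc (0:ℝ) 1) := by
    have := (intervalIntegral.intervalIntegrable_rpow' (a := 0) (b := 1) (r := a - 1)
      (by linarith)).comp_sub_left 1
    simp only [sub_zero, sub_self] at this
    have := this.symm
    rwa [intervalIntegrable_iff_integrableOn_Icc_of_le (by norm_num)] at this
  have hg : IntegrableOn
      (fun v : ℝ => (2:ℝ) ^ (1 - a) * (v ^ (a - 1) + (1 - v) ^ (a - 1))) (Set.Icc (0:ℝ) 1) :=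
    ((hint1.add hint2).const_mul _)
  refine Integrable.mono hg hmeas.aestronglyMeasurable ?_
  rw [ae_restrict_iff' measurableSet_Icc]
  refine ae_of_all _ fun v hv => ?_
  obtain ⟨hv0, hv1⟩ := hv
  have hA : 0 ≤ v ^ (a - 1) := Real.rpow_nonneg hv0 _
  have hB : 0 ≤ (1 - v) ^ (a - 1) := Real.rpow_nonneg (by linarith) _
  have h2 : (0:ℝ) < 2 ^ (1 - a) := Real.rpow_pos_of_pos (by norm_num) _
  have hhalf : ((1:ℝ)/2) ^ (a - 1) = 2 ^ (1 - a) := by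
    rw [one_div, Real.inv_rpow (by norm_num), ← Real.rpow_neg (by norm_num), neg_sub]
  rw [Real.norm_eq_abs, Real.norm_eq_abs, abs_of_nonneg (mul_nonneg hA hB),
    abs_of_nonneg (by positivity)]
  rcases le_total v (1/2) with hc | hc
  · have hb : (1 - v) ^ (a - 1) ≤ 2 ^ (1 - a) := by
      rw [← hhalf]
      exact Real.rpow_le_rpow_of_nonpos (by norm_num) (by linarith) (by linarith)
    nlinarith
  · have hb : v ^ (a - 1) ≤ 2 ^ (1 - a) := by
      rw [← hhalf]
      exact Real.rpow_le_rpow_of_nonpos (by norm_num) (by linarith) (by linarith)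
    nlinarith

lemma reflectIntegralAux {ι : Type*} [Fintype ι] [DecidableEq ι] (k : ι)
    (f : (ι → ℝ) → ℝ) :
    ∫ u in Set.univ.pi (fun _ : ι => Set.Icc (0:ℝ) 1),
        f (fun j => if j = k then 1 - u j else u j)
      = ∫ u in Set.univ.pi (fun _ : ι => Set.Icc (0:ℝ) 1), f u := by
  classical
  set T : (ι → ℝ) → (ι → ℝ) := fun u j => if j = k then 1 - u j else u j with hT
  have hTcomp : T = fun (u : ι → ℝ) (j : ι) =>
      (if j = k then (fun v : ℝ => 1 - v) else id) (u j) := by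
    funext u j
    by_cases h : j = k <;> simp [hT, h]
  have hmp : MeasurePreserving T volume volume := by
    rw [hTcomp]
    exact MeasureTheory.volume_preserving_pi fun i => by
      by_cases h : i = k
      · simpa [h] using Measure.measurePreserving_sub_left (volume : Measure ℝ) 1
      · simpa [h] using MeasurePreserving.id (volume : Measure ℝ)
  have hTT : ∀ u, T (T u) = u := by
    intro u; funext j; by_cases h : j = k <;> simp [hT, h]
  let e : (ι → ℝ) ≃ᵐ (ι → ℝ) :=
    { toFun := T, invFun := T, left_inv := hTT, right_inv := hTT,
      measurable_toFun := hmp.measurable, measurable_invFun := hmp.measurable }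
  have hs : MeasurableSet (Set.univ.pi (fun _ : ι => Set.Icc (0:ℝ) 1)) :=
    MeasurableSet.univ_pi fun _ => measurableSet_Icc
  have hmem : ∀ u, T u ∈ Set.univ.pi (fun _ : ι => Set.Icc (0:ℝ) 1) ↔
      u ∈ Set.univ.pi (fun _ : ι => Set.Icc (0:ℝ) 1) := by
    intro u
    constructor
    · intro h j _
      have := h j (Set.mem_univ j)
      by_cases hj : j = k
      · subst hj; simp only [hT, if_pos rfl] at this
        obtain ⟨h1, h2⟩ := this; constructor <;> linarith
      · simpa [hT, hj] using this
    · intro h j _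
      have := h j (Set.mem_univ j)
      by_cases hj : j = k
      · subst hj; simp only [hT, if_pos rfl]
        obtain ⟨h1, h2⟩ := this; constructor <;> simp <;> linarith
      · simpa [hT, hj] using this
  have key : ∫ u, (Set.univ.pi (fun _ : ι => Set.Icc (0:ℝ) 1)).indicator f (T u)
      = ∫ u, (Set.univ.pi (fun _ : ι => Set.Icc (0:ℝ) 1)).indicator f u := by
    have hcoe : ⇑e = T := rfl
    have he : MeasurableEmbedding T := hcoe ▸ e.measurableEmbedding
    exact hmp.integral_comp he _
  have hind : ∀ u, (Set.univ.pi (fun _ : ι => Set.Icc (0:ℝ) 1)).indicator f (T u)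
      = (Set.univ.pi (fun _ : ι => Set.Icc (0:ℝ) 1)).indicator (fun v => f (T v)) u := by
    intro u
    by_cases h : u ∈ Set.univ.pi (fun _ : ι => Set.Icc (0:ℝ) 1)
    · rw [Set.indicator_of_mem ((hmem u).mpr h), Set.indicator_of_mem h]
    · rw [Set.indicator_of_notMem (fun hc => h ((hmem u).mp hc)), Set.indicator_of_notMem h]
  rw [← integral_indicator hs, ← integral_indicator hs, ← key]
  congr 1
  funext u
  rw [hind]

set_option maxHeartbeats 2000000 in
/-- The normal derivative of the fundamental solution
`q(x,ξ) = γ r^{−2β} F_A^{(n)}(β, α; 2α; −4x_1ξ_1/r², …, −4x_nξ_n/r²)` of the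
singular elliptic equation vanishes on each singular hyperplane `x_k = 0`. -/
theorem fundamental_solution_normal_derivative (m n : ℕ) (hm : 2 < m) (hn : 1 ≤ n)
    (hnm : n ≤ m) (α : Fin m → ℝ)
    (hα : ∀ j : Fin m, (j : ℕ) < n → 0 < 2 * α j ∧ 2 * α j < 1)
    (β γ : ℝ)
    (hβ : β = ((m : ℝ) - 2) / 2 + ∑ j ∈ Finset.univ.filter fun j : Fin m => (j : ℕ) < n, α j)
    (hγ : γ = 2 ^ (2 * β - (m : ℝ)) * Real.Gamma β / Real.pi ^ ((m : ℝ) / 2) *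
      ∏ j ∈ Finset.univ.filter fun j : Fin m => (j : ℕ) < n,
        Real.Gamma (α j) / Real.Gamma (2 * α j))
    (q : (Fin m → ℝ) → (Fin m → ℝ) → ℝ)
    (hq : ∀ x ξ : Fin m → ℝ, q x ξ =
      γ * (∑ i, (x i - ξ i) ^ 2) ^ (-β) *
        lauricellaFA β (fun j : {i : Fin m // (i : ℕ) < n} => α j.1)
          (fun j => 2 * α j.1)
          (fun j => -4 * x j.1 * ξ j.1 / ∑ i, (x i - ξ i) ^ 2))
    (k : Fin m) (hk : (k : ℕ) < n)
    (x ξ : Fin m → ℝ) (hx : ∀ j : Fin m, (j : ℕ) < n → 0 ≤ x j)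
    (hξ : ∀ j : Fin m, (j : ℕ) < n → 0 < ξ j) (hne : x ≠ ξ) (hxk : x k = 0) :
    HasDerivWithinAt (fun t : ℝ => q (Function.update x k t) ξ) 0 (Set.Ici 0) 0 := by
  classical
  have hξk : 0 < ξ k := hξ k hk
  have hβpos : 0 < β := by
    rw [hβ]
    have h2m : (2:ℝ) < m := by exact_mod_cast hm
    have hsum : 0 ≤ ∑ j ∈ Finset.univ.filter fun j : Fin m => (j : ℕ) < n, α j :=
      Finset.sum_nonneg fun j hj => by
        have := (hα j (Finset.mem_filter.mp hj).2).1; linarith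
    linarith
  set k0 : {i : Fin m // (i : ℕ) < n} := ⟨k, hk⟩ with hk0
  set s : Set ({i : Fin m // (i : ℕ) < n} → ℝ) :=
    Set.univ.pi (fun _ => Set.Icc (0:ℝ) 1) with hs_def
  have hs : MeasurableSet s := MeasurableSet.univ_pi fun _ => measurableSet_Icc
  set E : ℝ := (∑ i ∈ Finset.univ.erase k, (x i - ξ i)^2) + ξ k ^ 2 with hE
  set D : ({i : Fin m // (i : ℕ) < n} → ℝ) → ℝ :=
    fun u => E + ∑ j ∈ Finset.univ.erase k0, 4 * x j.1 * ξ j.1 * u j with hD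
  set W : ({i : Fin m // (i : ℕ) < n} → ℝ) → ℝ :=
    fun u => ∏ j, (u j) ^ (α j.1 - 1) * (1 - u j) ^ (α j.1 - 1) with hW
  set Φ : ℝ → ({i : Fin m // (i : ℕ) < n} → ℝ) → ℝ :=
    fun t u => D u + t^2 + 2*t*ξ k*(2 * u k0 - 1) with hΦ
  set H : ℝ → ({i : Fin m // (i : ℕ) < n} → ℝ) → ℝ :=
    fun t u => W u * Φ t u ^ (-β) with hH
  set H' : ℝ → ({i : Fin m // (i : ℕ) < n} → ℝ) → ℝ :=
    fun t u => W u * (-β * Φ t u ^ (-β - 1) * (2*t + 2*ξ k*(2 * u k0 - 1))) with hH'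
  set G : ℝ → ℝ := fun t => ∫ u in s, H t u with hGdef
  -- basic bounds
  have hαj : ∀ j : {i : Fin m // (i : ℕ) < n}, 0 < α j.1 ∧ α j.1 < 1/2 := by
    intro j; have := hα j.1 j.2; constructor <;> linarith [this.1, this.2]
  have hDlb : ∀ u ∈ s, ξ k ^ 2 ≤ D u := by
    intro u hu
    have h1 : 0 ≤ ∑ i ∈ Finset.univ.erase k, (x i - ξ i)^2 :=
      Finset.sum_nonneg fun i _ => sq_nonneg _
    have h2 : 0 ≤ ∑ j ∈ Finset.univ.erase k0, 4 * x j.1 * ξ j.1 * u j :=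
      Finset.sum_nonneg fun j _ => by
        have hxj := hx j.1 j.2
        have hξj := (hξ j.1 j.2).le
        have huj := (hu j (Set.mem_univ j)).1
        positivity
    rw [hD, hE]; dsimp only; linarith
  have hΦlb : ∀ t : ℝ, |t| ≤ ξ k / 2 → ∀ u ∈ s, (ξ k / 2)^2 ≤ Φ t u := by
    intro t ht u hu
    obtain ⟨ht1, ht2⟩ := abs_le.mp ht
    obtain ⟨hu0, hu1⟩ := (hu k0 (Set.mem_univ k0) : u k0 ∈ Set.Icc (0:ℝ) 1)
    have hDu := hDlb u hu
    have key : ∀ DD c tt : ℝ, -(ξ k/2) ≤ tt → tt ≤ ξ k/2 → 0 ≤ c → c ≤ 1 → ξ k^2 ≤ DD →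
        (ξ k/2)^2 ≤ DD + tt^2 + 2*tt*ξ k*(2*c-1) := by
      intro DD c tt h1 h2 h3 h4 h5
      nlinarith [mul_nonneg (mul_nonneg (sub_nonneg.mpr h2) (sub_nonneg.mpr h2)) (sub_nonneg.mpr h4),
        mul_nonneg (mul_nonneg (by linarith : (0:ℝ) ≤ ξ k/2 + tt) (by linarith : (0:ℝ) ≤ ξ k/2 + tt)) h3,
        mul_nonneg (by linarith : (0:ℝ) ≤ ξ k/2 - tt) (by linarith : (0:ℝ) ≤ ξ k/2 + tt)]
    rw [hΦ]; dsimp only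
    exact key (D u) (u k0) t ht1 ht2 hu0 hu1 hDu
  have hΦpos : ∀ t : ℝ, |t| ≤ ξ k / 2 → ∀ u ∈ s, 0 < Φ t u := fun t ht u hu =>
    lt_of_lt_of_le (by positivity) (hΦlb t ht u hu)
  -- measurability
  have hWm : Measurable W := by
    rw [hW]
    exact Finset.measurable_prod _ fun j _ =>
      ((measurableRpowConstAux (α j.1 - 1)).comp (measurable_pi_apply j)).mul
        ((measurableRpowConstAux (α j.1 - 1)).comp (measurable_const.sub (measurable_pi_apply j)))
  have hDm : Measurable D := by
    rw [hD]
    exact measurable_const.add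
      (Finset.measurable_sum _ fun j _ => (measurable_pi_apply j).const_mul _)
  have hΦm : ∀ t, Measurable (Φ t) := by
    intro t
    rw [hΦ]
    exact (hDm.add_const (t^2)).add
      (by fun_prop)
  have hHm : ∀ t, Measurable (H t) := by
    intro t
    rw [hH]
    exact hWm.mul ((measurableRpowConstAux (-β)).comp (hΦm t))
  have hH'm : ∀ t, Measurable (H' t) := by
    intro t
    rw [hH']
    exact hWm.mul
      ((((measurableRpowConstAux (-β-1)).comp (hΦm t)).const_mul (-β)).mul
        (by fun_prop))
  -- integrability of W
  have hWint : IntegrableOn W s := by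
    have hf1 : ∀ j : {i : Fin m // (i : ℕ) < n}, Integrable
        ((Set.Icc (0:ℝ) 1).indicator (fun v => v ^ (α j.1 - 1) * (1 - v) ^ (α j.1 - 1))) :=
      fun j => (integrable_indicator_iff measurableSet_Icc).mpr
        (betaIntegrableAux (hαj j).1 (by linarith [(hαj j).2]))
    have hprod := MeasureTheory.Integrable.fintype_prod (𝕜 := ℝ)
      (f := fun (j : {i : Fin m // (i : ℕ) < n}) v =>
        (Set.Icc (0:ℝ) 1).indicator (fun w => w ^ (α j.1 - 1) * (1 - w) ^ (α j.1 - 1)) v) hf1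
    have hindW : s.indicator W = fun u => ∏ j,
        (Set.Icc (0:ℝ) 1).indicator (fun w => w ^ (α j.1 - 1) * (1 - w) ^ (α j.1 - 1)) (u j) := by
      funext u
      by_cases hu : u ∈ s
      · rw [Set.indicator_of_mem hu, hW]
        refine Finset.prod_congr rfl fun j _ => ?_
        have hj' : u j ∈ Set.Icc (0:ℝ) 1 := hu j (Set.mem_univ j)
        exact (Set.indicator_of_mem hj' (fun w => w ^ (α j.1 - 1) * (1 - w) ^ (α j.1 - 1))).symm
      · rw [Set.indicator_of_notMem hu]
        obtain ⟨j, hj⟩ : ∃ j, u j ∉ Set.Icc (0:ℝ) 1 := by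
          by_contra hcon; push_neg at hcon; exact hu fun j _ => hcon j
        exact (Finset.prod_eq_zero (Finset.mem_univ j)
          (by rw [Set.indicator_of_notMem hj])).symm
    rw [show (IntegrableOn W s volume) = Integrable (s.indicator W) volume from
      (propext (integrable_indicator_iff hs)).symm, hindW]
    exact hprod
  -- derivative of Φ in t
  have hder : ∀ (t : ℝ) (u : {i : Fin m // (i : ℕ) < n} → ℝ),
      HasDerivAt (fun t' => Φ t' u) (2*t + 2*ξ k*(2 * u k0 - 1)) t := by
    intro t u
    have hfun : (fun t' : ℝ => Φ t' u)
        = fun t' : ℝ => t' ^ 2 + ((2*ξ k*(2 * u k0 - 1)) * t' + D u) := by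
      funext t'; rw [hΦ]; ring
    rw [hfun]
    have h := (hasDerivAt_pow 2 t).add
      (((hasDerivAt_id t).const_mul (2*ξ k*(2 * u k0 - 1))).add_const (D u))
    refine h.congr_deriv ?_
    push_cast
    ring
  -- integrability of H 0
  have hH0int : Integrable (H 0) (volume.restrict s) := by
    refine Integrable.mono ((hWint.abs.mul_const (((ξ k/2)^2) ^ (-β))))
      ((hHm 0).aestronglyMeasurable) ?_
    rw [ae_restrict_iff' hs]
    refine ae_of_all _ fun u hu => ?_
    have hpos := hΦpos 0 (by simp [hξk.le]; positivity) u hu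
    have hlb := hΦlb 0 (by simp [hξk.le]; positivity) u hu
    rw [hH]
    dsimp only
    rw [Real.norm_eq_abs, Real.norm_eq_abs, abs_mul,
      abs_of_nonneg (Real.rpow_nonneg hpos.le _), abs_mul,
      abs_of_nonneg (Real.rpow_nonneg (by positivity : (0:ℝ) ≤ (ξ k/2)^2) _), abs_abs]
    exact mul_le_mul le_rfl
      (Real.rpow_le_rpow_of_nonpos (by positivity) hlb (by linarith))
      (Real.rpow_nonneg hpos.le _) (abs_nonneg _)
  -- DCT
  have hball : (0:ℝ) < ξ k / 2 := by positivity
  obtain ⟨-, hGderiv⟩ := hasDerivAt_integral_of_dominated_loc_of_deriv_le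
    (μ := volume.restrict s) (F := H) (F' := H') (x₀ := (0:ℝ))
    (bound := fun u => |W u| * (β * (((ξ k/2)^2) ^ (-β-1)) * (3 * ξ k)))
    (Metric.ball_mem_nhds 0 hball)
    (Filter.Eventually.of_forall fun t => (hHm t).aestronglyMeasurable)
    hH0int
    ((hH'm 0).aestronglyMeasurable)
    (by
      rw [ae_restrict_iff' hs]
      refine ae_of_all _ fun u hu t ht => ?_
      have habs : |t| ≤ ξ k / 2 := by
        rw [Metric.mem_ball, Real.dist_eq, sub_zero] at ht; exact ht.le
      have hpos := hΦpos t habs u hu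
      have hlb := hΦlb t habs u hu
      obtain ⟨hu0, hu1⟩ := hu k0 (Set.mem_univ k0)
      obtain ⟨ht1, ht2⟩ := abs_le.mp habs
      have h3 : |2*t + 2*ξ k*(2 * u k0 - 1)| ≤ 3 * ξ k :=
        abs_le.mpr ⟨by nlinarith, by nlinarith⟩
      rw [hH']
      dsimp only
      rw [Real.norm_eq_abs, abs_mul, abs_mul, abs_mul, abs_neg,
        abs_of_nonneg hβpos.le, abs_of_nonneg (Real.rpow_nonneg hpos.le _)]
      have h1 : Φ t u ^ (-β-1) ≤ ((ξ k/2)^2) ^ (-β-1) :=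
        Real.rpow_le_rpow_of_nonpos (by positivity) hlb (by linarith)
      have h2 := mul_le_mul
        (mul_le_mul le_rfl h1 (Real.rpow_nonneg hpos.le _) hβpos.le)
        h3 (abs_nonneg _) (by positivity)
      exact mul_le_mul le_rfl h2 (by positivity) (abs_nonneg _))
    ((hWint.abs.mul_const _))
    (by
      rw [ae_restrict_iff' hs]
      refine ae_of_all _ fun u hu t ht => ?_
      have habs : |t| ≤ ξ k / 2 := by
        rw [Metric.mem_ball, Real.dist_eq, sub_zero] at ht; exact ht.le
      have hpos := hΦpos t habs u hu
      have h1 := (hder t u).rpow_const (p := -β) (Or.inl hpos.ne')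
      have h2 := h1.const_mul (W u)
      have hfun : (fun t' => H t' u) = fun t' => W u * Φ t' u ^ (-β) := by
        funext t'; rw [hH]
      rw [hfun, hH']
      dsimp only
      refine h2.congr_deriv ?_
      ring)
  have hGderiv' : HasDerivAt G (∫ u, H' 0 u ∂(volume.restrict s)) 0 := hGderiv
  -- evenness
  have hGeven : ∀ t : ℝ, G (-t) = G t := by
    intro t
    have hrefl := reflectIntegralAux k0 (H t)
    rw [← hs_def] at hrefl
    rw [hGdef]
    dsimp only
    rw [← hrefl]
    apply setIntegral_congr_fun hs
    intro u hu
    rw [hH]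
    dsimp only
    have hWeq : W (fun j => if j = k0 then 1 - u j else u j) = W u := by
      rw [hW]
      dsimp only
      refine Finset.prod_congr rfl fun j _ => ?_
      by_cases hj : j = k0
      · subst hj; rw [if_pos rfl, sub_sub_cancel]; ring
      · rw [if_neg hj]
    have hΦeq : Φ t (fun j => if j = k0 then 1 - u j else u j) = Φ (-t) u := by
      rw [hΦ, hD]
      dsimp only
      have hsum : ∑ j ∈ Finset.univ.erase k0, 4 * x j.1 * ξ j.1 *
          (if j = k0 then 1 - u j else u j)
          = ∑ j ∈ Finset.univ.erase k0, 4 * x j.1 * ξ j.1 * u j :=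
        Finset.sum_congr rfl fun j hj => by rw [if_neg (Finset.ne_of_mem_erase hj)]
      rw [hsum, if_pos rfl]
      ring
    rw [hWeq, hΦeq]
  set L0 : ℝ := ∫ u, H' 0 u ∂(volume.restrict s) with hL0def
  have hneg : HasDerivAt (fun t : ℝ => G (-t)) (L0 * -1) 0 := by
    have h0 : HasDerivAt G L0 (-(0:ℝ)) := by rw [neg_zero]; exact hGderiv'
    exact h0.comp 0 (hasDerivAt_neg' 0)
  have hL0 : L0 = 0 := by
    have heq : (fun t : ℝ => G (-t)) = G := funext hGeven
    rw [heq] at hneg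
    have := hGderiv'.unique hneg
    linarith
  -- representation near 0
  set P0 : ℝ := ∏ j : {i : Fin m // (i : ℕ) < n},
      Real.Gamma (2 * α j.1) / (Real.Gamma (α j.1) * Real.Gamma (2 * α j.1 - α j.1)) with hP0
  have hrep : ∀ t ∈ Metric.ball (0:ℝ) (ξ k / 2),
      q (Function.update x k t) ξ = γ * P0 * G t := by
    intro t ht
    have habs : |t| < ξ k / 2 := by rwa [Metric.mem_ball, Real.dist_eq, sub_zero] at ht
    rw [hq]
    set R : ℝ := ∑ i, (Function.update x k t i - ξ i)^2 with hRdef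
    have hRsplit : R = (∑ i ∈ Finset.univ.erase k, (x i - ξ i)^2) + (t - ξ k)^2 := by
      rw [hRdef, ← Finset.sum_erase_add _ _ (Finset.mem_univ k)]
      congr 1
      · exact Finset.sum_congr rfl fun i hi => by
          rw [Function.update_of_ne (Finset.ne_of_mem_erase hi)]
      · rw [Function.update_self]
    have hCnn : 0 ≤ ∑ i ∈ Finset.univ.erase k, (x i - ξ i)^2 :=
      Finset.sum_nonneg fun i _ => sq_nonneg _
    have htne : t - ξ k ≠ 0 := by
      intro h
      have h' : t = ξ k := by linarith [sub_eq_zero.mp h]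
      rw [h', abs_of_nonneg hξk.le] at habs
      linarith
    have hRpos : 0 < R := by
      rw [hRsplit]
      have h2 : 0 < (t - ξ k)^2 := by
        rcases lt_or_gt_of_ne htne with h | h
        · nlinarith
        · nlinarith
      linarith
    unfold lauricellaFA
    rw [← hP0]
    have key : R ^ (-β) * (∫ u in Set.univ.pi
        (fun _ : {i : Fin m // (i : ℕ) < n} => Set.Icc (0:ℝ) 1),
        (∏ i, u i ^ (α i.1 - 1) * (1 - u i) ^ (2 * α i.1 - α i.1 - 1)) *
          (1 - ∑ i, -4 * Function.update x k t i.1 * ξ i.1 / R * u i) ^ (-β)) = G t := by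
      rw [hGdef]
      dsimp only
      rw [← hs_def, ← MeasureTheory.integral_const_mul]
      apply setIntegral_congr_fun hs
      intro u hu
      dsimp only
      have hprodW : (∏ i : {i : Fin m // (i : ℕ) < n},
          u i ^ (α i.1 - 1) * (1 - u i) ^ (2 * α i.1 - α i.1 - 1)) = W u := by
        rw [hW]
        exact Finset.prod_congr rfl fun j _ => by
          rw [show 2 * α j.1 - α j.1 - 1 = α j.1 - 1 by ring]
      have hx'k : Function.update x k t (k0 : Fin m) = t := by
        rw [hk0]; exact Function.update_self _ _ _
      have hsum4 : ∑ j : {i : Fin m // (i : ℕ) < n},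
          4 * Function.update x k t j.1 * ξ j.1 * u j = Φ t u - R := by
        rw [← Finset.sum_erase_add _ _ (Finset.mem_univ k0)]
        have h1 : ∑ j ∈ Finset.univ.erase k0, 4 * Function.update x k t j.1 * ξ j.1 * u j
            = ∑ j ∈ Finset.univ.erase k0, 4 * x j.1 * ξ j.1 * u j :=
          Finset.sum_congr rfl fun j hj => by
            have hjk : (j : Fin m) ≠ k := fun h => (Finset.ne_of_mem_erase hj) (Subtype.ext h)
            rw [Function.update_of_ne hjk]
        rw [h1, hx'k, hΦ, hD, hRsplit, hE]
        dsimp only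
        ring
      have hΦu : 0 < Φ t u := hΦpos t habs.le u hu
      have h1S : (1:ℝ) - ∑ j : {i : Fin m // (i : ℕ) < n},
          -4 * Function.update x k t j.1 * ξ j.1 / R * u j = Φ t u / R := by
        have hA : ∑ j : {i : Fin m // (i : ℕ) < n},
            -4 * Function.update x k t j.1 * ξ j.1 / R * u j
            = (∑ j : {i : Fin m // (i : ℕ) < n},
                4 * Function.update x k t j.1 * ξ j.1 * u j) * (-1/R) := by
          rw [Finset.sum_mul]
          exact Finset.sum_congr rfl fun j _ => by ring
        rw [hA, hsum4]
        field_simp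
        ring
      rw [hprodW, h1S, Real.div_rpow hΦu.le hRpos.le, hH]
      dsimp only
      have hRne : R ^ (-β) ≠ 0 := (Real.rpow_pos_of_pos hRpos _).ne'
      field_simp
    have habstract : ∀ I : ℝ, R ^ (-β) * I = G t →
        γ * R ^ (-β) * (P0 * I) = γ * P0 * G t := by
      intro I hI; rw [← hI]; ring
    exact habstract _ key
  have hfin : HasDerivAt (fun t : ℝ => q (Function.update x k t) ξ) (γ * P0 * L0) 0 := by
    have h1 : HasDerivAt (fun t => γ * P0 * G t) (γ * P0 * L0) 0 := hGderiv'.const_mul (γ * P0)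
    refine h1.congr_of_eventuallyEq ?_
    filter_upwards [Metric.ball_mem_nhds (0:ℝ) hball] with t ht
    exact hrep t ht
  rw [hL0, mul_zero] at hfin
  exact hfin.hasDerivWithinAt
end

section
/- Let m > 2, 1 ≤ n ≤ m, and 0 < 2α_j < 1 for j = 1,…,n, and let Ω = {x ∈ ℝ^m : x_1 > 0, …, x_n > 0}. Suppose u_1 and u_2 are both twice continuously differentiable in Ω and continuously differentiable up to the closure of Ω, both satisfy the equation Σ_{i=1}^m ∂²u/∂x_i² + Σ_{j=1}^n (2α_j/x_j) ∂u/∂x_j = 0 in Ω, both satisfy, for every k = 1,…,n and every boundary point x with x_k = 0 and the remaining coordinates x_i > 0 (i ≤ n, i ≠ k), the same weighted Neumann condition lim_{x_k→0+} x_k^{2α_k} ∂u/∂x_k = ν_k(x̃_k), and both satisfy u(x) → 0 as |x| → ∞ in Ω. Then u_1 = u_2 on Ω. -/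
open MeasureTheory Real Filter Topology

set_option maxHeartbeats 1000000

/-- Second derivative test: at a local max of a function differentiable nearby,
`deriv (deriv f) ≤ 0`. -/
lemma second_deriv_nonpos_of_isLocalMax {f : ℝ → ℝ} {a : ℝ}
    (hf : ∀ᶠ t in 𝓝 a, DifferentiableAt ℝ f t)
    (hmax : IsLocalMax f a) : deriv (deriv f) a ≤ 0 := by
  by_contra hc
  push_neg at hc
  have hdiff2 : DifferentiableAt ℝ (deriv f) a := by
    by_contra h
    rw [deriv_zero_of_not_differentiableAt h] at hc
    exact lt_irrefl 0 hc
  have hd : HasDerivAt (deriv f) (deriv (deriv f) a) a := hdiff2.hasDerivAt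
  have h0 : deriv f a = 0 := hmax.deriv_eq_zero
  have hslope : Tendsto (slope (deriv f) a) (𝓝[≠] a) (𝓝 (deriv (deriv f) a)) :=
    hasDerivAt_iff_tendsto_slope.mp hd
  have hev : ∀ᶠ t in 𝓝[≠] a, 0 < slope (deriv f) a t := hslope.eventually (lt_mem_nhds hc)
  -- convert to: eventually in 𝓝 a, t ≠ a → ...
  rw [eventually_nhdsWithin_iff] at hev
  have hall : ∀ᶠ t in 𝓝 a, (t ∈ ({a}ᶜ : Set ℝ) → 0 < slope (deriv f) a t) ∧
      DifferentiableAt ℝ f t ∧ f t ≤ f a := hev.and (hf.and hmax)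
  rw [Metric.eventually_nhds_iff] at hall
  obtain ⟨ε, hε, hP⟩ := hall
  have hab : a < a + ε / 2 := by linarith
  have hmono : StrictMonoOn f (Set.Icc a (a + ε / 2)) := by
    apply strictMonoOn_of_deriv_pos (convex_Icc a (a + ε / 2))
    · intro x hx
      have : dist x a < ε := by
        rw [Real.dist_eq, abs_lt]
        constructor <;> linarith [hx.1, hx.2, half_lt_self hε, hε]
      exact ((hP this).2.1).continuousAt.continuousWithinAt
    · intro x hx
      rw [interior_Icc] at hx
      have hdist : dist x a < ε := by
        rw [Real.dist_eq, abs_lt]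
        constructor <;> linarith [hx.1, hx.2, half_lt_self hε, hε]
      have hxa : x ≠ a := ne_of_gt hx.1
      have hsl := (hP hdist).1 hxa
      rw [slope_def_field, h0] at hsl
      have hxa' : 0 < x - a := by linarith [hx.1]
      have := mul_pos hsl hxa'
      rw [sub_zero] at this
      calc (0:ℝ) < deriv f x / (x - a) * (x - a) := this
        _ = deriv f x := by field_simp
  have hfb : f a < f (a + ε / 2) := hmono (Set.left_mem_Icc.mpr hab.le) (Set.right_mem_Icc.mpr hab.le) hab
  have hdistb : dist (a + ε / 2) a < ε := by
    rw [Real.dist_eq, abs_lt]; constructor <;> linarith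
  exact absurd (hP hdistb).2.2 (not_le.mpr hfb)

variable {m : ℕ}

/-- The slice of a `C²` function on an open set is `C²` on the preimage. -/
lemma slice_contDiffOn {u : (Fin m → ℝ) → ℝ} {Ω : Set (Fin m → ℝ)}
    (hu : ContDiffOn ℝ 2 u Ω) (x : Fin m → ℝ) (i : Fin m) :
    ContDiffOn ℝ 2 (fun t : ℝ => u (Function.update x i t))
      ((fun t : ℝ => Function.update x i t) ⁻¹' Ω) :=
  hu.comp ((contDiff_update 2 x i).contDiffOn) (Set.mapsTo_preimage _ _)

lemma slice_diff_facts {u : (Fin m → ℝ) → ℝ} {Ω : Set (Fin m → ℝ)} (hΩ : IsOpen Ω)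
    (hu : ContDiffOn ℝ 2 u Ω) (x : Fin m → ℝ) (i : Fin m) :
    ∀ s ∈ ((fun t : ℝ => Function.update x i t) ⁻¹' Ω),
      DifferentiableAt ℝ (fun t : ℝ => u (Function.update x i t)) s ∧
      DifferentiableAt ℝ (deriv fun t : ℝ => u (Function.update x i t)) s := by
  intro s hs
  have hIopen : IsOpen ((fun t : ℝ => Function.update x i t) ⁻¹' Ω) :=
    hΩ.preimage (contDiff_update (𝕜 := ℝ) 2 x i).continuous
  have h2 := slice_contDiffOn hu x i
  constructor
  · exact ((h2.differentiableOn (by norm_num)) s hs).differentiableAt (hIopen.mem_nhds hs)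
  · have h1 : ContDiffOn ℝ 1 (deriv fun t : ℝ => u (Function.update x i t))
        ((fun t : ℝ => Function.update x i t) ⁻¹' Ω) :=
      h2.deriv_of_isOpen hIopen (by norm_num)
    exact ((h1.differentiableOn (by norm_num)) s hs).differentiableAt (hIopen.mem_nhds hs)

/-- First and second derivatives of a difference of two `C²` functions on an open set. -/
lemma deriv_sub_of_contDiffOn {F G : ℝ → ℝ} {I : Set ℝ} (hI : IsOpen I) {a : ℝ} (ha : a ∈ I)
    (hF : ∀ s ∈ I, DifferentiableAt ℝ F s ∧ DifferentiableAt ℝ (deriv F) s)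
    (hG : ∀ s ∈ I, DifferentiableAt ℝ G s ∧ DifferentiableAt ℝ (deriv G) s) :
    deriv (fun t => F t - G t) a = deriv F a - deriv G a ∧
    deriv (deriv fun t => F t - G t) a = deriv (deriv F) a - deriv (deriv G) a := by
  have h1 : ∀ s ∈ I, deriv (fun t => F t - G t) s = deriv F s - deriv G s :=
    fun s hs => deriv_sub (hF s hs).1 (hG s hs).1
  refine ⟨h1 a ha, ?_⟩
  have heq : (deriv fun t => F t - G t) =ᶠ[𝓝 a] (fun s => deriv F s - deriv G s) :=
    Filter.eventuallyEq_of_mem (hI.mem_nhds ha) h1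
  rw [heq.deriv_eq]
  exact deriv_sub (hF a ha).2 (hG a ha).2

lemma omega_isOpen (m n : ℕ) : IsOpen {x : Fin m → ℝ | ∀ i : Fin m, (i : ℕ) < n → 0 < x i} := by
  have : {x : Fin m → ℝ | ∀ i : Fin m, (i : ℕ) < n → 0 < x i} =
      ⋂ i : Fin m, {x : Fin m → ℝ | (i : ℕ) < n → 0 < x i} := by
    ext x; simp [Set.mem_iInter]
  rw [this]
  refine isOpen_iInter_of_finite fun i => ?_
  by_cases hi : (i : ℕ) < n
  · have : {x : Fin m → ℝ | (i : ℕ) < n → 0 < x i} = {x : Fin m → ℝ | 0 < x i} := by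
      ext x; simp [hi]
    rw [this]
    exact isOpen_lt continuous_const (continuous_apply i)
  · have : {x : Fin m → ℝ | (i : ℕ) < n → 0 < x i} = Set.univ := by
      ext x; simp [hi]
    rw [this]; exact isOpen_univ

lemma closure_omega (m n : ℕ) :
    closure {x : Fin m → ℝ | ∀ i : Fin m, (i : ℕ) < n → 0 < x i} =
      {x : Fin m → ℝ | ∀ i : Fin m, (i : ℕ) < n → 0 ≤ x i} := by
  apply le_antisymm
  · apply closure_minimal
    · intro x hx i hi; exact (hx i hi).le
    · have : {x : Fin m → ℝ | ∀ i : Fin m, (i : ℕ) < n → 0 ≤ x i} =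
          ⋂ i : Fin m, {x : Fin m → ℝ | (i : ℕ) < n → 0 ≤ x i} := by
        ext x; simp [Set.mem_iInter]
      rw [this]
      refine isClosed_iInter fun i => ?_
      by_cases hi : (i : ℕ) < n
      · have : {x : Fin m → ℝ | (i : ℕ) < n → 0 ≤ x i} = {x : Fin m → ℝ | 0 ≤ x i} := by
          ext x; simp [hi]
        rw [this]
        exact isClosed_le continuous_const (continuous_apply i)
      · have : {x : Fin m → ℝ | (i : ℕ) < n → 0 ≤ x i} = Set.univ := by
          ext x; simp [hi]
        rw [this]; exact isClosed_univ
  · intro x hx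
    have htd : Tendsto (fun t : ℝ => x + t • (fun _ : Fin m => (1:ℝ))) (𝓝[>] 0) (𝓝 x) := by
      have h0 : Tendsto (fun t : ℝ => x + t • (fun _ : Fin m => (1:ℝ))) (𝓝 0) (𝓝 x) := by
        have hcnt : Continuous (fun t : ℝ => x + t • (fun _ : Fin m => (1:ℝ))) := by fun_prop
        have := hcnt.tendsto (0 : ℝ)
        simpa using this
      exact h0.mono_left nhdsWithin_le_nhds
    refine mem_closure_of_tendsto htd ?_
    filter_upwards [self_mem_nhdsWithin] with t ht
    intro i hi
    have := hx i hi
    simp only [Pi.add_apply, Pi.smul_apply, smul_eq_mul, mul_one]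
    exact add_pos_of_nonneg_of_pos this ht

lemma norm_le_sqrt_sum_sq {m : ℕ} (x : Fin m → ℝ) : ‖x‖ ≤ Real.sqrt (∑ i, x i ^ 2) := by
  rw [pi_norm_le_iff_of_nonneg (Real.sqrt_nonneg _)]
  intro i
  rw [Real.norm_eq_abs, ← Real.sqrt_sq_eq_abs]
  exact Real.sqrt_le_sqrt (Finset.single_le_sum (fun j _ => sq_nonneg (x j)) (Finset.mem_univ i))

lemma key (m n : ℕ) (hm : 2 < m) (hn : 1 ≤ n) (hnm : n ≤ m)
    (α : Fin m → ℝ) (hα : ∀ j : Fin m, (j : ℕ) < n → 0 < 2 * α j ∧ 2 * α j < 1)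
    (Ω : Set (Fin m → ℝ)) (hΩ : Ω = {x | ∀ i : Fin m, (i : ℕ) < n → 0 < x i})
    (w : (Fin m → ℝ) → ℝ)
    (hw2 : ContDiffOn ℝ 2 w Ω) (hw1 : ContDiffOn ℝ 1 w (closure Ω))
    (hpde : ∀ x ∈ Ω,
      (∑ i : Fin m, deriv (deriv fun t : ℝ => w (Function.update x i t)) (x i)) +
        ∑ j ∈ Finset.univ.filter fun j : Fin m => (j : ℕ) < n,
          2 * α j / x j * deriv (fun t : ℝ => w (Function.update x j t)) (x j) = 0)
    (hdecay : ∀ ε > (0 : ℝ), ∃ R : ℝ, ∀ x ∈ Ω, R < Real.sqrt (∑ i, x i ^ 2) → |w x| < ε)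
    (x₀ : Fin m → ℝ) (hx₀ : x₀ ∈ Ω) : w x₀ ≤ 0 := by
  by_contra hpos
  push_neg at hpos
  set c := w x₀ with hcdef
  -- basic facts
  have hΩopen : IsOpen Ω := hΩ ▸ omega_isOpen m n
  have hclos : closure Ω = {x : Fin m → ℝ | ∀ i : Fin m, (i : ℕ) < n → 0 ≤ x i} :=
    hΩ ▸ closure_omega m n
  have hΩsub : Ω ⊆ closure Ω := subset_closure
  have hj₀ : (0 : ℕ) < m := by omega
  set j₀ : Fin m := ⟨0, hj₀⟩ with hj₀def
  have hj₀n : (j₀ : ℕ) < n := hn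
  -- decay radius
  obtain ⟨R₀, hR₀⟩ := hdecay (c / 2) (by linarith)
  set R' : ℝ := max (max (R₀ + 1) (‖x₀‖ + 1)) 1 with hR'def
  have hR'1 : 1 ≤ R' := le_max_right _ _
  have hR'0 : 0 < R' := lt_of_lt_of_le one_pos hR'1
  have hR'x₀ : ‖x₀‖ < R' := lt_of_lt_of_le (lt_add_one _)
    (le_trans (le_max_right _ _) (le_max_left _ _))
  have hR'R₀ : R₀ < R' := lt_of_lt_of_le (lt_add_one _)
    (le_trans (le_max_left _ _) (le_max_left _ _))
  -- far field bound on the closure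
  have hfar : ∀ x ∈ closure Ω, R' ≤ ‖x‖ → |w x| ≤ c / 2 := by
    intro x hxcl hxR
    have hsq : R₀ < Real.sqrt (∑ i, x i ^ 2) :=
      lt_of_lt_of_le (lt_of_lt_of_le hR'R₀ hxR) (norm_le_sqrt_sum_sq x)
    -- approximate x from inside Ω
    set y : ℝ → (Fin m → ℝ) := fun t => x + t • (fun _ : Fin m => (1:ℝ)) with hydef
    have hy0 : Tendsto y (𝓝[>] 0) (𝓝 x) := by
      have h0 : Tendsto y (𝓝 0) (𝓝 x) := by
        have hcnt : Continuous (fun t : ℝ => x + t • (fun _ : Fin m => (1:ℝ))) := by fun_prop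
        have := hcnt.tendsto (0 : ℝ)
        simpa [hydef] using this
      exact h0.mono_left nhdsWithin_le_nhds
    have hymem : ∀ t ∈ Set.Ioi (0:ℝ), y t ∈ Ω := by
      intro t ht
      rw [hΩ]
      intro i hi
      have hxi : 0 ≤ x i := by rw [hclos] at hxcl; exact hxcl i hi
      simp only [hydef, Pi.add_apply, Pi.smul_apply, smul_eq_mul, mul_one]
      exact add_pos_of_nonneg_of_pos hxi ht
    have hyΩ : Tendsto y (𝓝[>] 0) (𝓝[Ω] x) := by
      rw [tendsto_nhdsWithin_iff]
      exact ⟨hy0, Filter.eventually_of_mem self_mem_nhdsWithin hymem⟩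
    have hwcont : ContinuousWithinAt w Ω x :=
      ((hw1.continuousOn x hxcl).mono hΩsub)
    have hwy : Tendsto (fun t => w (y t)) (𝓝[>] 0) (𝓝 (w x)) := hwcont.tendsto.comp hyΩ
    have habs : Tendsto (fun t => |w (y t)|) (𝓝[>] 0) (𝓝 |w x|) := hwy.abs
    have hsqy : Tendsto (fun t => Real.sqrt (∑ i, y t i ^ 2)) (𝓝[>] 0)
        (𝓝 (Real.sqrt (∑ i, x i ^ 2))) := by
      have hcont : Continuous (fun z : Fin m → ℝ => Real.sqrt (∑ i, z i ^ 2)) := by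
        exact Real.continuous_sqrt.comp (continuous_finset_sum _ fun i _ =>
          (continuous_apply i).pow 2)
      exact (hcont.tendsto x).comp (hy0)
    have hev : ∀ᶠ t in 𝓝[>] (0:ℝ), |w (y t)| ≤ c / 2 := by
      have h1 : ∀ᶠ t in 𝓝[>] (0:ℝ), R₀ < Real.sqrt (∑ i, y t i ^ 2) :=
        hsqy.eventually (lt_mem_nhds hsq)
      filter_upwards [h1, self_mem_nhdsWithin] with t h1t h2t
      exact (hR₀ (y t) (hymem t h2t) h1t).le
    exact le_of_tendsto habs hev
  -- barrier and comparison function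
  set filt := Finset.univ.filter (fun j : Fin m => (j : ℕ) < n) with hfilt
  set B : (Fin m → ℝ) → ℝ := fun x => ∑ k ∈ filt, (x k) ^ (1 - 2 * α k) with hBdef
  set δ : ℝ := c / (8 * (m * R' + 1)) with hδdef
  have hmR' : (0:ℝ) < m * R' + 1 := by positivity
  have hδ0 : 0 < δ := by
    apply div_pos hpos
    positivity
  set τ : ℝ := c / (8 * Real.exp R') with hτdef
  have hτ0 : 0 < τ := div_pos hpos (by positivity)
  set v : (Fin m → ℝ) → ℝ := fun x => w x + δ * B x + τ * Real.exp (x j₀) with hvdef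
  set K : Set (Fin m → ℝ) := closure Ω ∩ Metric.closedBall 0 R' with hKdef
  have hKcomp : IsCompact K := (isCompact_closedBall 0 R').inter_left isClosed_closure
  have hx₀K : x₀ ∈ K := ⟨hΩsub hx₀, by rw [mem_closedBall_zero_iff]; exact hR'x₀.le⟩
  have hBcont : Continuous B := by
    apply continuous_finset_sum
    intro k hk
    have hkn : (k : ℕ) < n := by
      rw [hfilt, Finset.mem_filter] at hk; exact hk.2
    have hexp : (0:ℝ) ≤ 1 - 2 * α k := by linarith [(hα k hkn).2]
    exact (continuous_iff_continuousAt.mpr fun y =>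
      Real.continuousAt_rpow_const y _ (Or.inr hexp)).comp (continuous_apply k)
  have hvcont : ContinuousOn v K := by
    apply ContinuousOn.add
    apply ContinuousOn.add
    · exact (hw1.continuousOn).mono Set.inter_subset_left
    · exact (continuous_const.mul hBcont).continuousOn
    · exact (continuous_const.mul (Real.continuous_exp.comp (continuous_apply j₀))).continuousOn
  obtain ⟨p, hpK, hpmax⟩ := hKcomp.exists_isMaxOn ⟨x₀, hx₀K⟩ hvcont
  -- lower bound for the max value
  have hB0 : ∀ x : Fin m → ℝ, (∀ i : Fin m, (i : ℕ) < n → 0 ≤ x i) → 0 ≤ B x := by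
    intro x hx
    apply Finset.sum_nonneg
    intro k hk
    have hkn : (k : ℕ) < n := by rw [hfilt, Finset.mem_filter] at hk; exact hk.2
    exact Real.rpow_nonneg (hx k hkn) _
  have hvx₀ : c < v x₀ := by
    have hBx₀ : 0 ≤ B x₀ := hB0 x₀ (fun i hi => ((hΩ ▸ hx₀) i hi).le)
    have hE : 0 < τ * Real.exp (x₀ j₀) := mul_pos hτ0 (Real.exp_pos _)
    have hveq : v x₀ = w x₀ + δ * B x₀ + τ * Real.exp (x₀ j₀) := rfl
    nlinarith [mul_nonneg hδ0.le hBx₀]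
  have hvp : c < v p := lt_of_lt_of_le hvx₀ (hpmax hx₀K)
  -- bound on B over K
  have hBK : ∀ x ∈ K, B x ≤ m * R' := by
    intro x hxK
    have hxcl : ∀ i : Fin m, (i : ℕ) < n → 0 ≤ x i := by
      rw [hKdef, hclos] at hxK; exact hxK.1
    have hxnorm : ‖x‖ ≤ R' := by
      have := hxK.2; rwa [mem_closedBall_zero_iff] at this
    have hterm : ∀ k ∈ filt, (x k) ^ (1 - 2 * α k) ≤ R' := by
      intro k hk
      have hkn : (k : ℕ) < n := by rw [hfilt, Finset.mem_filter] at hk; exact hk.2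
      have h1 : (x k) ^ (1 - 2 * α k) ≤ R' ^ (1 - 2 * α k) := by
        apply Real.rpow_le_rpow (hxcl k hkn)
        · calc x k ≤ |x k| := le_abs_self _
            _ = ‖x k‖ := (Real.norm_eq_abs _).symm
            _ ≤ ‖x‖ := norm_le_pi_norm x k
            _ ≤ R' := hxnorm
        · linarith [(hα k hkn).2]
      have h2 : R' ^ (1 - 2 * α k) ≤ R' ^ (1:ℝ) := by
        apply Real.rpow_le_rpow_of_exponent_le hR'1
        linarith [(hα k hkn).1]
      rw [Real.rpow_one] at h2
      linarith
    calc B x ≤ ∑ _k ∈ filt, R' := Finset.sum_le_sum hterm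
      _ = filt.card * R' := by rw [Finset.sum_const, nsmul_eq_mul]
      _ ≤ m * R' := by
        apply mul_le_mul_of_nonneg_right _ hR'0.le
        have : filt.card ≤ m := le_trans (Finset.card_filter_le _ _) (by simp)
        exact_mod_cast this
  -- p is not on the outer sphere
  have hpnorm : ‖p‖ < R' := by
    by_contra hge
    push_neg at hge
    have hwb : |w p| ≤ c / 2 := hfar p hpK.1 hge
    have hBb : δ * B p ≤ c / 8 := by
      have h1 : B p ≤ m * R' := hBK p hpK
      have h2 : δ * B p ≤ δ * (m * R') := by
        apply mul_le_mul_of_nonneg_left h1 hδ0.le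
      have h3 : δ * (m * R') ≤ c / 8 := by
        rw [hδdef]
        rw [div_mul_eq_mul_div, div_le_div_iff₀ (by positivity) (by norm_num)]
        nlinarith [hpos, hR'0, hmR']
      linarith
    have hEb : τ * Real.exp (p j₀) ≤ c / 8 := by
      have h1 : p j₀ ≤ R' := by
        calc p j₀ ≤ |p j₀| := le_abs_self _
          _ = ‖p j₀‖ := (Real.norm_eq_abs _).symm
          _ ≤ ‖p‖ := norm_le_pi_norm p j₀
          _ ≤ R' := by
            have := hpK.2; rwa [mem_closedBall_zero_iff] at this
      have h2 : Real.exp (p j₀) ≤ Real.exp R' := Real.exp_le_exp.mpr h1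
      have h3 : τ * Real.exp (p j₀) ≤ τ * Real.exp R' := by
        apply mul_le_mul_of_nonneg_left h2 hτ0.le
      have h4 : τ * Real.exp R' = c / 8 := by
        rw [hτdef]; field_simp
      linarith
    have hveq : v p = w p + δ * B p + τ * Real.exp (p j₀) := rfl
    have habs := abs_le.mp hwb
    linarith [hvp, habs.2]
  by_cases hpΩ : p ∈ Ω
  · -- interior case
    have hpU : p ∈ Ω ∩ Metric.ball 0 R' := ⟨hpΩ, by rwa [mem_ball_zero_iff]⟩
    have hUopen : IsOpen (Ω ∩ Metric.ball 0 R') := hΩopen.inter Metric.isOpen_ball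
    have hUK : Ω ∩ Metric.ball 0 R' ⊆ K := fun y hy =>
      ⟨hΩsub hy.1, Metric.ball_subset_closedBall hy.2⟩
    have hlm : IsLocalMax v p :=
      Filter.eventually_of_mem (hUopen.mem_nhds hpU) (fun y hy => hpmax (hUK hy))
    have hppos : ∀ i : Fin m, (i : ℕ) < n → 0 < p i := fun i hi => (hΩ ▸ hpΩ) i hi
    have hcoord : ∀ i : Fin m,
        deriv (fun t : ℝ => w (Function.update p i t)) (p i) =
          -(δ * (if (i:ℕ) < n then (1 - 2*α i) * p i ^ (1 - 2*α i - 1) else 0))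
          - τ * (if i = j₀ then Real.exp (p j₀) else 0) ∧
        deriv (deriv fun t : ℝ => w (Function.update p i t)) (p i)
          + δ * (if (i:ℕ) < n then
              (1 - 2*α i) * ((1 - 2*α i - 1) * p i ^ (1 - 2*α i - 1 - 1)) else 0)
          + τ * (if i = j₀ then Real.exp (p j₀) else 0) ≤ 0 := by
      intro i
      set I : Set ℝ := (fun t : ℝ => Function.update p i t) ⁻¹' Ω with hIdef
      have hIopen : IsOpen I := hΩopen.preimage (contDiff_update (𝕜 := ℝ) 2 p i).continuous
      have hpiI : p i ∈ I := by
        simp only [hIdef, Set.mem_preimage, Function.update_eq_self]; exact hpΩ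
      have hwfacts := slice_diff_facts hΩopen hw2 p i
      set g : ℝ → ℝ := fun s => if (i:ℕ) < n then (1 - 2*α i) * s ^ (1 - 2*α i - 1) else 0
        with hgdef
      set h : ℝ → ℝ := fun s => if i = j₀ then Real.exp s else 0 with hhdef
      -- derivative of the barrier slice
      have hBsl : ∀ s ∈ I, HasDerivAt (fun t : ℝ => B (Function.update p i t)) (g s) s := by
        intro s hs
        have hspos : (i:ℕ) < n → 0 < s := by
          intro hin
          have hmem : Function.update p i s ∈ Ω := hs
          rw [hΩ] at hmem
          have := hmem i hin
          rwa [Function.update_self] at this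
        have hterm : ∀ k ∈ filt, HasDerivAt
            (fun t : ℝ => (Function.update p i t k) ^ (1 - 2*α k))
            (if k = i then (1 - 2*α i) * s ^ (1 - 2*α i - 1) else 0) s := by
          intro k hk
          by_cases hki : k = i
          · subst hki
            have hin : (k:ℕ) < n := by
              have hk' := hk; rw [hfilt] at hk'; exact (Finset.mem_filter.mp hk').2
            have heq : (fun t : ℝ => (Function.update p k t k) ^ (1 - 2*α k)) =
                fun t : ℝ => t ^ (1 - 2*α k) := by
              funext t; rw [Function.update_self]
            rw [heq, if_pos rfl]
            exact Real.hasDerivAt_rpow_const (Or.inl (ne_of_gt (hspos hin)))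
          · have heq : (fun t : ℝ => (Function.update p i t k) ^ (1 - 2*α k)) =
                fun _ : ℝ => (p k) ^ (1 - 2*α k) := by
              funext t; rw [Function.update_of_ne hki]
            rw [heq, if_neg hki]
            exact hasDerivAt_const s _
        have hsum := HasDerivAt.sum hterm
        have hval : ∑ k ∈ filt, (if k = i then (1 - 2*α i) * s ^ (1 - 2*α i - 1) else 0) = g s := by
          rw [Finset.sum_ite_eq' filt i (fun _ => (1 - 2*α i) * s ^ (1 - 2*α i - 1))]
          rw [hgdef]
          simp only [hfilt, Finset.mem_filter, Finset.mem_univ, true_and]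
        rw [hval] at hsum
        rw [show (∑ i_1 ∈ filt, fun t : ℝ => Function.update p i t i_1 ^ (1 - 2 * α i_1)) =
            fun t => B (Function.update p i t) from
          funext fun t => Finset.sum_apply t filt _] at hsum
        exact hsum
      -- derivative of the exponential slice
      have hEsl : ∀ s : ℝ, HasDerivAt (fun t : ℝ => Real.exp (Function.update p i t j₀))
          (h s) s := by
        intro s
        by_cases hij : i = j₀
        · have heq : (fun t : ℝ => Real.exp (Function.update p i t j₀)) =
              fun t : ℝ => Real.exp t := by
            funext t; rw [← hij, Function.update_self]
          rw [heq]
          have hhs : h s = Real.exp s := by rw [hhdef]; simp [hij]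
          rw [hhs]
          exact Real.hasDerivAt_exp s
        · have heq : (fun t : ℝ => Real.exp (Function.update p i t j₀)) =
              fun _ : ℝ => Real.exp (p j₀) := by
            funext t; rw [Function.update_of_ne (Ne.symm hij)]
          rw [heq]
          have : h s = 0 := by rw [hhdef]; simp [hij]
          rw [this]
          exact hasDerivAt_const s _
      -- derivative of the slice of v
      have hsli : ∀ s ∈ I, HasDerivAt (fun t : ℝ => v (Function.update p i t))
          (deriv (fun t : ℝ => w (Function.update p i t)) s + δ * g s + τ * h s) s := by
        intro s hs
        have h1 : HasDerivAt (fun t : ℝ => w (Function.update p i t))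
            (deriv (fun t : ℝ => w (Function.update p i t)) s) s :=
          ((hwfacts s hs).1).hasDerivAt
        have h2 := ((hBsl s hs).const_mul δ)
        have h3 := ((hEsl s).const_mul τ)
        have hres := (h1.add h2).add h3
        exact hres
      -- slice local max
      have hlmi : IsLocalMax (fun t : ℝ => v (Function.update p i t)) (p i) := by
        have hct : ContinuousAt (Function.update p i) (p i) :=
          (contDiff_update (𝕜 := ℝ) 1 p i).continuous.continuousAt
        have htd := hct.tendsto
        rw [Function.update_eq_self] at htd
        have hev := htd.eventually hlm
        have hveq : v (Function.update p i (p i)) = v p := by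
          rw [Function.update_eq_self]
        unfold IsLocalMax IsMaxFilter
        simp only [hveq]
        exact hev
      -- first derivative vanishes
      have hD1 : deriv (fun t : ℝ => v (Function.update p i t)) (p i) = 0 :=
        hlmi.deriv_eq_zero
      have hD1' : deriv (fun t : ℝ => w (Function.update p i t)) (p i)
          + δ * g (p i) + τ * h (p i) = 0 := by
        rw [← (hsli (p i) hpiI).deriv]; exact hD1
      -- second derivative nonpositive
      have hd2 : deriv (deriv fun t : ℝ => v (Function.update p i t)) (p i) ≤ 0 := by
        apply second_deriv_nonpos_of_isLocalMax _ hlmi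
        exact Filter.eventually_of_mem (hIopen.mem_nhds hpiI)
          (fun s hs => (hsli s hs).differentiableAt)
      have heqd : (deriv fun t : ℝ => v (Function.update p i t)) =ᶠ[𝓝 (p i)]
          (fun s => deriv (fun t : ℝ => w (Function.update p i t)) s + δ * g s + τ * h s) :=
        Filter.eventuallyEq_of_mem (hIopen.mem_nhds hpiI) (fun s hs => (hsli s hs).deriv)
      rw [heqd.deriv_eq] at hd2
      -- compute the derivative of the explicit derivative function
      have hg' : HasDerivAt g (if (i:ℕ) < n then
          (1 - 2*α i) * ((1 - 2*α i - 1) * p i ^ (1 - 2*α i - 1 - 1)) else 0) (p i) := by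
        by_cases hin : (i:ℕ) < n
        · have hgeq : g = fun s => (1 - 2*α i) * s ^ (1 - 2*α i - 1) := by
            funext s; rw [hgdef]; simp [hin]
          rw [hgeq, if_pos hin]
          exact (Real.hasDerivAt_rpow_const
            (Or.inl (ne_of_gt (hppos i hin)))).const_mul (1 - 2*α i)
        · have hgeq : g = fun _ => (0:ℝ) := by
            funext s; rw [hgdef]; simp [hin]
          rw [hgeq, if_neg hin]
          exact hasDerivAt_const _ _
      have hh' : HasDerivAt h (if i = j₀ then Real.exp (p j₀) else 0) (p i) := by
        by_cases hij : i = j₀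
        · have hheq : h = Real.exp := by funext s; rw [hhdef]; simp [hij]
          rw [hheq, if_pos hij, hij]
          exact Real.hasDerivAt_exp _
        · have hheq : h = fun _ => (0:ℝ) := by funext s; rw [hhdef]; simp [hij]
          rw [hheq, if_neg hij]
          exact hasDerivAt_const _ _
      have hDv' : HasDerivAt
          (fun s => deriv (fun t : ℝ => w (Function.update p i t)) s + δ * g s + τ * h s)
          (deriv (deriv fun t : ℝ => w (Function.update p i t)) (p i)
            + δ * (if (i:ℕ) < n then
                (1 - 2*α i) * ((1 - 2*α i - 1) * p i ^ (1 - 2*α i - 1 - 1)) else 0)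
            + τ * (if i = j₀ then Real.exp (p j₀) else 0)) (p i) := by
        exact (((hwfacts (p i) hpiI).2.hasDerivAt).add (hg'.const_mul δ)).add (hh'.const_mul τ)
      rw [hDv'.deriv] at hd2
      constructor
      · -- from hD1'
        have hgpi : g (p i) = if (i:ℕ) < n then (1 - 2*α i) * p i ^ (1 - 2*α i - 1) else 0 := rfl
        have hhpi : h (p i) = if i = j₀ then Real.exp (p j₀) else 0 := by
          rw [hhdef]
          by_cases hij : i = j₀
          · simp [hij]
          · simp [hij]
        rw [hgpi, hhpi] at hD1'
        linarith
      · exact hd2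
    -- summation and contradiction
    have hpde0 := hpde p hpΩ
    have hsum2 : (∑ i : Fin m, deriv (deriv fun t : ℝ => w (Function.update p i t)) (p i))
        + δ * (∑ j ∈ filt, (1 - 2*α j) * ((1 - 2*α j - 1) * p j ^ (1 - 2*α j - 1 - 1)))
        + τ * Real.exp (p j₀) ≤ 0 := by
      have h := Finset.sum_nonpos (fun i (_ : i ∈ Finset.univ) => (hcoord i).2)
      rw [Finset.sum_add_distrib, Finset.sum_add_distrib, ← Finset.mul_sum, ← Finset.mul_sum] at h
      have h1 : (∑ i : Fin m, if (i:ℕ) < n then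
          (1 - 2*α i) * ((1 - 2*α i - 1) * p i ^ (1 - 2*α i - 1 - 1)) else 0)
          = ∑ j ∈ filt, (1 - 2*α j) * ((1 - 2*α j - 1) * p j ^ (1 - 2*α j - 1 - 1)) := by
        rw [hfilt, Finset.sum_filter]
      have h2 : (∑ i : Fin m, if i = j₀ then Real.exp (p j₀) else 0) = Real.exp (p j₀) := by
        rw [Finset.sum_ite_eq' Finset.univ j₀ (fun _ => Real.exp (p j₀))]
        simp
      rw [h1, h2] at h
      exact h
    have hsum1 : (∑ j ∈ filt, 2 * α j / p j * deriv (fun t : ℝ => w (Function.update p j t)) (p j))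
        = -(δ * ∑ j ∈ filt, 2 * α j / p j * ((1 - 2*α j) * p j ^ (1 - 2*α j - 1)))
          - τ * (2 * α j₀ / p j₀ * Real.exp (p j₀)) := by
      have hterm : ∀ j ∈ filt,
          2 * α j / p j * deriv (fun t : ℝ => w (Function.update p j t)) (p j)
          = -(δ * (2 * α j / p j * ((1 - 2*α j) * p j ^ (1 - 2*α j - 1))))
            - (if j = j₀ then τ * (2 * α j / p j * Real.exp (p j₀)) else 0) := by
        intro j hj
        have hjn : (j:ℕ) < n := by
          have hj' := hj; rw [hfilt] at hj'; exact (Finset.mem_filter.mp hj').2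
        have hc := (hcoord j).1
        rw [if_pos hjn] at hc
        rw [hc]
        by_cases hj0 : j = j₀
        · rw [if_pos hj0, if_pos hj0]; ring
        · rw [if_neg hj0, if_neg hj0]; ring
      rw [Finset.sum_congr rfl hterm, Finset.sum_sub_distrib]
      have h3 : (∑ j ∈ filt, -(δ * (2 * α j / p j * ((1 - 2*α j) * p j ^ (1 - 2*α j - 1)))))
          = -(δ * ∑ j ∈ filt, 2 * α j / p j * ((1 - 2*α j) * p j ^ (1 - 2*α j - 1))) := by
        rw [Finset.sum_neg_distrib, ← Finset.mul_sum]
      have hj₀filt : j₀ ∈ filt := by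
        rw [hfilt]; exact Finset.mem_filter.mpr ⟨Finset.mem_univ _, hj₀n⟩
      have h4 : (∑ j ∈ filt, if j = j₀ then τ * (2 * α j / p j * Real.exp (p j₀)) else 0)
          = τ * (2 * α j₀ / p j₀ * Real.exp (p j₀)) := by
        rw [Finset.sum_ite_eq' filt j₀ (fun j => τ * (2 * α j / p j * Real.exp (p j₀))),
          if_pos hj₀filt]
      rw [h3, h4]
    -- combine
    have hS0 : (∑ j ∈ filt, (1 - 2*α j) * ((1 - 2*α j - 1) * p j ^ (1 - 2*α j - 1 - 1)))
        + (∑ j ∈ filt, 2 * α j / p j * ((1 - 2*α j) * p j ^ (1 - 2*α j - 1))) = 0 := by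
      rw [← Finset.sum_add_distrib]
      apply Finset.sum_eq_zero
      intro j hj
      have hjn : (j:ℕ) < n := by
        have hj' := hj; rw [hfilt] at hj'; exact (Finset.mem_filter.mp hj').2
      have hp : 0 < p j := hppos j hjn
      have hpow : p j ^ (1 - 2*α j - 1 - 1) = p j ^ (1 - 2*α j - 1) / p j := by
        rw [Real.rpow_sub hp, Real.rpow_one]
      rw [hpow]
      field_simp
      ring
    have hepos : 0 < Real.exp (p j₀) := Real.exp_pos _
    have hfrac : 0 < 2 * α j₀ / p j₀ := div_pos (hα j₀ hj₀n).1 (hppos j₀ hj₀n)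
    -- from the PDE
    rw [hsum1] at hpde0
    -- hpde0 : Σd2 - δ*S1' stuff = 0 ; hsum2 : Σd2 + δ*S2 + τ e ≤ 0
    nlinarith [mul_pos hτ0 (mul_pos hfrac hepos), mul_pos hτ0 hepos,
      mul_le_mul_of_nonneg_left hS0.le hδ0.le]
  · -- face case
    have hpcl : ∀ i : Fin m, (i:ℕ) < n → 0 ≤ p i := by
      have := hpK.1; rw [hclos] at this; exact this
    obtain ⟨k, hkn, hpk0⟩ : ∃ k : Fin m, (k:ℕ) < n ∧ p k = 0 := by
      by_contra hco
      push_neg at hco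
      apply hpΩ
      rw [hΩ]
      intro i hi
      exact lt_of_le_of_ne (hpcl i hi) (Ne.symm (hco i hi))
    have hck : 0 < 1 - 2*α k := by linarith [(hα k hkn).2]
    set q : ℝ → (Fin m → ℝ) := fun t => p + t • (Pi.single k 1 : Fin m → ℝ) with hqdef
    have hqupdate : ∀ t : ℝ, q t = Function.update p k t := by
      intro t; funext j
      by_cases hjk : j = k
      · subst hjk
        simp [hqdef, Pi.single_eq_same, hpk0]
      · simp [hqdef, Pi.single_eq_of_ne hjk, Function.update_of_ne hjk]
    have hqK : ∀ t : ℝ, 0 < t → t ≤ R' - ‖p‖ → q t ∈ K := by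
      intro t ht htR
      constructor
      · rw [hclos]
        intro i hi
        rw [hqupdate]
        by_cases hik : i = k
        · subst hik; rw [Function.update_self]; exact ht.le
        · rw [Function.update_of_ne hik]; exact hpcl i hi
      · rw [mem_closedBall_zero_iff]
        calc ‖q t‖ ≤ ‖p‖ + ‖t • (Pi.single k 1 : Fin m → ℝ)‖ := by
              rw [hqdef]; exact norm_add_le _ _
          _ = ‖p‖ + |t| * ‖(Pi.single k 1 : Fin m → ℝ)‖ := by rw [norm_smul, Real.norm_eq_abs]
          _ = ‖p‖ + t := by rw [abs_of_pos ht, Pi.norm_single, norm_one, mul_one]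
          _ ≤ R' := by linarith
    have hdw : DifferentiableWithinAt ℝ w (closure Ω) p :=
      (hw1.differentiableOn (by norm_num)) p hpK.1
    obtain ⟨f, hf⟩ : ∃ f : (Fin m → ℝ) →L[ℝ] ℝ, HasFDerivWithinAt w f (closure Ω) p :=
      ⟨fderivWithin ℝ w (closure Ω) p, hdw.hasFDerivWithinAt⟩
    set D : ℝ := f ((Pi.single k 1 : Fin m → ℝ)) with hDdef
    have hqtend : Tendsto q (𝓝[>] 0) (𝓝[closure Ω] p) := by
      rw [tendsto_nhdsWithin_iff]
      constructor
      · have hcnt : Continuous q := by rw [hqdef]; fun_prop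
        have h0 : Tendsto q (𝓝 0) (𝓝 p) := by
          have := hcnt.tendsto 0
          simpa [hqdef] using this
        exact h0.mono_left nhdsWithin_le_nhds
      · filter_upwards [self_mem_nhdsWithin] with t ht
        rw [hclos]
        intro i hi
        rw [hqupdate]
        by_cases hik : i = k
        · subst hik; rw [Function.update_self]; exact (le_of_lt ht)
        · rw [Function.update_of_ne hik]; exact hpcl i hi
    have hlo := hf.isLittleO.comp_tendsto hqtend
    have hqp : ∀ t : ℝ, q t - p = t • (Pi.single k 1 : Fin m → ℝ) := by
      intro t; simp [hqdef]
    have hev1 : ∀ᶠ t in 𝓝[>] (0:ℝ), t * D - t ≤ w (q t) - w p := by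
      have h1 := hlo.def one_pos
      filter_upwards [h1, self_mem_nhdsWithin] with t hbt ht
      simp only [Function.comp] at hbt
      rw [hqp t] at hbt
      have hfs : f (t • (Pi.single k 1 : Fin m → ℝ)) = t * D := by
        rw [_root_.map_smul]; simp [hDdef, smul_eq_mul]
      rw [hfs] at hbt
      have hnorm : ‖t • (Pi.single k 1 : Fin m → ℝ)‖ = t := by
        rw [norm_smul, Real.norm_eq_abs, abs_of_pos ht, Pi.norm_single, norm_one, mul_one]
      rw [hnorm, one_mul, Real.norm_eq_abs] at hbt
      have habs := abs_le.mp hbt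
      linarith [habs.1]
    have hBeq : ∀ y : Fin m → ℝ, B y = ∑ j ∈ filt, (y j) ^ (1 - 2*α j) := fun y => rfl
    have hkfilt : k ∈ filt := by
      rw [hfilt]; exact Finset.mem_filter.mpr ⟨Finset.mem_univ _, hkn⟩
    have hBq : ∀ t : ℝ, 0 < t → B (q t) - B p = t ^ (1 - 2*α k) := by
      intro t ht
      rw [hBeq, hBeq, ← Finset.sum_sub_distrib]
      rw [Finset.sum_eq_single k]
      · rw [hqupdate, Function.update_self, hpk0, Real.zero_rpow (ne_of_gt hck), sub_zero]
      · intro j hj hjk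
        rw [hqupdate, Function.update_of_ne hjk, sub_self]
      · intro hknot; exact absurd hkfilt hknot
    have hEq : ∀ t : ℝ, 0 < t → 0 ≤ Real.exp (q t j₀) - Real.exp (p j₀) := by
      intro t ht
      have hle : p j₀ ≤ q t j₀ := by
        rw [hqupdate]
        by_cases hjk : j₀ = k
        · rw [hjk, Function.update_self, hpk0]
          exact ht.le
        · rw [Function.update_of_ne hjk]
      have := Real.exp_le_exp.mpr hle
      linarith
    have hdiv : Tendsto (fun t : ℝ => t ^ (1 - 2*α k - 1)) (𝓝[>] (0:ℝ)) atTop := by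
      have h1 : Tendsto (fun t : ℝ => (t⁻¹) ^ (2*α k)) (𝓝[>] (0:ℝ)) atTop :=
        (tendsto_rpow_atTop (hα k hkn).1).comp tendsto_inv_nhdsGT_zero
      apply Tendsto.congr' _ h1
      filter_upwards [self_mem_nhdsWithin] with t ht
      have ht0 : (0:ℝ) < t := ht
      rw [Real.inv_rpow ht0.le, ← Real.rpow_neg ht0.le]
      congr 1
      ring
    have hfinal : ∀ᶠ t in 𝓝[>] (0:ℝ), False := by
      have hev2 : ∀ᶠ t in 𝓝[>] (0:ℝ), (1 - D) < δ * t ^ (1 - 2*α k - 1) := by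
        have hgt := hdiv.eventually_gt_atTop ((1 - D)/δ)
        filter_upwards [hgt] with t ht
        rw [div_lt_iff₀ hδ0] at ht
        nlinarith [ht]
      have hRp : (0:ℝ) < R' - ‖p‖ := by linarith
      filter_upwards [hev1, hev2,
        Ioo_mem_nhdsGT_of_mem (Set.left_mem_Ico.mpr hRp)] with t h1 h2 ht
      have ht0 : 0 < t := ht.1
      have hmem : q t ∈ K := hqK t ht0 (le_of_lt ht.2)
      have hmax' : w (q t) + δ * B (q t) + τ * Real.exp (q t j₀)
          ≤ w p + δ * B p + τ * Real.exp (p j₀) := hpmax hmem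
      have hBdiff := hBq t ht0
      have hEdiff := hEq t ht0
      have hτE : 0 ≤ τ * (Real.exp (q t j₀) - Real.exp (p j₀)) := mul_nonneg hτ0.le hEdiff
      have hsplit : δ * t ^ (1 - 2*α k - 1) * t = δ * t ^ (1 - 2*α k) := by
        have hexp : (1 - 2*α k) = (1 - 2*α k - 1) + 1 := by ring
        rw [hexp, Real.rpow_add_one (ne_of_gt ht0)]
        ring
      have hmul : (1 - D) * t < δ * t ^ (1 - 2*α k - 1) * t :=
        mul_lt_mul_of_pos_right h2 ht0
      rw [hsplit] at hmul
      have hδB : δ * B (q t) - δ * B p = δ * t ^ (1 - 2*α k) := by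
        rw [← mul_sub, hBdiff]
      nlinarith [h1, hmul, hτE, hmax', hδB]
    obtain ⟨t, hfalse⟩ := hfinal.exists
    exact hfalse


/-- **Uniqueness for the Neumann problem** (Theorem 1 of the paper): two solutions of
the singular elliptic equation `Σ ∂²u/∂x_i² + Σ (2α_j/x_j) ∂u/∂x_j = 0` in the open
orthant `Ω`, of class `C²(Ω) ∩ C¹(closure Ω)`, with the same weighted Neumann data
on each singular face and both vanishing at infinity, coincide on `Ω`. -/
theorem neumann_uniqueness (m n : ℕ) (hm : 2 < m) (hn : 1 ≤ n) (hnm : n ≤ m)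
    (α : Fin m → ℝ) (hα : ∀ j : Fin m, (j : ℕ) < n → 0 < 2 * α j ∧ 2 * α j < 1)
    (Ω : Set (Fin m → ℝ)) (hΩ : Ω = {x | ∀ i : Fin m, (i : ℕ) < n → 0 < x i})
    (ν : Fin m → (Fin m → ℝ) → ℝ)
    (hνcont : ∀ k : Fin m, (k : ℕ) < n →
      ContinuousOn (ν k) {x | x k = 0 ∧ ∀ i : Fin m, (i : ℕ) < n → i ≠ k → 0 < x i})
    (u₁ u₂ : (Fin m → ℝ) → ℝ)
    (hreg : ∀ u ∈ ({u₁, u₂} : Set ((Fin m → ℝ) → ℝ)),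
      ContDiffOn ℝ 2 u Ω ∧ ContDiffOn ℝ 1 u (closure Ω))
    (hpde : ∀ u ∈ ({u₁, u₂} : Set ((Fin m → ℝ) → ℝ)), ∀ x ∈ Ω,
      (∑ i : Fin m, deriv (deriv fun t : ℝ => u (Function.update x i t)) (x i)) +
        ∑ j ∈ Finset.univ.filter fun j : Fin m => (j : ℕ) < n,
          2 * α j / x j * deriv (fun t : ℝ => u (Function.update x j t)) (x j) = 0)
    (hneumann : ∀ u ∈ ({u₁, u₂} : Set ((Fin m → ℝ) → ℝ)), ∀ k : Fin m, (k : ℕ) < n →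
      ∀ x : Fin m → ℝ, x k = 0 → (∀ i : Fin m, (i : ℕ) < n → i ≠ k → 0 < x i) →
      Filter.Tendsto
        (fun t : ℝ => t ^ (2 * α k) * deriv (fun s : ℝ => u (Function.update x k s)) t)
        (nhdsWithin 0 (Set.Ioi 0)) (nhds (ν k x)))
    (hdecay : ∀ u ∈ ({u₁, u₂} : Set ((Fin m → ℝ) → ℝ)), ∀ ε > (0 : ℝ), ∃ R : ℝ,
      ∀ x ∈ Ω, R < Real.sqrt (∑ i, x i ^ 2) → |u x| < ε) :
    Set.EqOn u₁ u₂ Ω := by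
  have hm1 : u₁ ∈ ({u₁, u₂} : Set ((Fin m → ℝ) → ℝ)) := by simp
  have hm2 : u₂ ∈ ({u₁, u₂} : Set ((Fin m → ℝ) → ℝ)) := by simp
  have h1 := hreg u₁ hm1
  have h2 := hreg u₂ hm2
  have hp1 := hpde u₁ hm1
  have hp2 := hpde u₂ hm2
  have hd1 := hdecay u₁ hm1
  have hd2 := hdecay u₂ hm2
  have hΩopen : IsOpen Ω := hΩ ▸ omega_isOpen m n
  -- the difference of two solutions satisfies the pde
  have hpdiff : ∀ (f g : (Fin m → ℝ) → ℝ), ContDiffOn ℝ 2 f Ω → ContDiffOn ℝ 2 g Ω →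
      (∀ x ∈ Ω, (∑ i : Fin m, deriv (deriv fun t : ℝ => f (Function.update x i t)) (x i)) +
        ∑ j ∈ Finset.univ.filter fun j : Fin m => (j : ℕ) < n,
          2 * α j / x j * deriv (fun t : ℝ => f (Function.update x j t)) (x j) = 0) →
      (∀ x ∈ Ω, (∑ i : Fin m, deriv (deriv fun t : ℝ => g (Function.update x i t)) (x i)) +
        ∑ j ∈ Finset.univ.filter fun j : Fin m => (j : ℕ) < n,
          2 * α j / x j * deriv (fun t : ℝ => g (Function.update x j t)) (x j) = 0) →
      ∀ x ∈ Ω,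
      (∑ i : Fin m, deriv (deriv fun t : ℝ =>
          f (Function.update x i t) - g (Function.update x i t)) (x i)) +
        ∑ j ∈ Finset.univ.filter fun j : Fin m => (j : ℕ) < n,
          2 * α j / x j * deriv (fun t : ℝ =>
            f (Function.update x j t) - g (Function.update x j t)) (x j) = 0 := by
    intro f g hf hg hpf hpg x hx
    have hsl : ∀ i : Fin m,
        deriv (fun t : ℝ => f (Function.update x i t) - g (Function.update x i t)) (x i) =
          deriv (fun t : ℝ => f (Function.update x i t)) (x i) -
            deriv (fun t : ℝ => g (Function.update x i t)) (x i) ∧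
        deriv (deriv fun t : ℝ => f (Function.update x i t) - g (Function.update x i t)) (x i) =
          deriv (deriv fun t : ℝ => f (Function.update x i t)) (x i) -
            deriv (deriv fun t : ℝ => g (Function.update x i t)) (x i) := by
      intro i
      have hIopen : IsOpen ((fun t : ℝ => Function.update x i t) ⁻¹' Ω) :=
        hΩopen.preimage (contDiff_update (𝕜 := ℝ) 2 x i).continuous
      have hxiI : x i ∈ (fun t : ℝ => Function.update x i t) ⁻¹' Ω := by
        simp only [Set.mem_preimage, Function.update_eq_self]; exact hx
      exact deriv_sub_of_contDiffOn hIopen hxiI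
        (slice_diff_facts hΩopen hf x i) (slice_diff_facts hΩopen hg x i)
    have hA : (∑ i : Fin m, deriv (deriv fun t : ℝ =>
        f (Function.update x i t) - g (Function.update x i t)) (x i))
        = (∑ i : Fin m, deriv (deriv fun t : ℝ => f (Function.update x i t)) (x i))
          - ∑ i : Fin m, deriv (deriv fun t : ℝ => g (Function.update x i t)) (x i) := by
      rw [← Finset.sum_sub_distrib]
      exact Finset.sum_congr rfl (fun i _ => (hsl i).2)
    have hB : (∑ j ∈ Finset.univ.filter fun j : Fin m => (j : ℕ) < n,
        2 * α j / x j * deriv (fun t : ℝ =>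
          f (Function.update x j t) - g (Function.update x j t)) (x j))
        = (∑ j ∈ Finset.univ.filter fun j : Fin m => (j : ℕ) < n,
            2 * α j / x j * deriv (fun t : ℝ => f (Function.update x j t)) (x j))
          - ∑ j ∈ Finset.univ.filter fun j : Fin m => (j : ℕ) < n,
            2 * α j / x j * deriv (fun t : ℝ => g (Function.update x j t)) (x j) := by
      rw [← Finset.sum_sub_distrib]
      refine Finset.sum_congr rfl (fun j _ => ?_)
      rw [(hsl j).1, mul_sub]
    rw [hA, hB]
    have hf0 := hpf x hx
    have hg0 := hpg x hx
    linarith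
  -- decay of the difference
  have hdec : ∀ (f g : (Fin m → ℝ) → ℝ),
      (∀ ε > (0:ℝ), ∃ R : ℝ, ∀ x ∈ Ω, R < Real.sqrt (∑ i, x i ^ 2) → |f x| < ε) →
      (∀ ε > (0:ℝ), ∃ R : ℝ, ∀ x ∈ Ω, R < Real.sqrt (∑ i, x i ^ 2) → |g x| < ε) →
      ∀ ε > (0:ℝ), ∃ R : ℝ, ∀ x ∈ Ω, R < Real.sqrt (∑ i, x i ^ 2) → |f x - g x| < ε := by
    intro f g hf hg ε hε
    obtain ⟨R₁, hR₁⟩ := hf (ε/2) (by linarith)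
    obtain ⟨R₂, hR₂⟩ := hg (ε/2) (by linarith)
    refine ⟨max R₁ R₂, fun x hx hR => ?_⟩
    have ha := hR₁ x hx (lt_of_le_of_lt (le_max_left _ _) hR)
    have hb := hR₂ x hx (lt_of_le_of_lt (le_max_right _ _) hR)
    have h3 : |f x - g x| ≤ |f x| + |g x| := by
      calc |f x - g x| = |f x + -(g x)| := by rw [sub_eq_add_neg]
        _ ≤ |f x| + |-(g x)| := abs_add_le _ _
        _ = |f x| + |g x| := by rw [abs_neg]
    linarith
  intro x hx
  have hkey1 := key m n hm hn hnm α hα Ω hΩ (fun y => u₁ y - u₂ y)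
    (h1.1.sub h2.1) (h1.2.sub h2.2)
    (hpdiff u₁ u₂ h1.1 h2.1 hp1 hp2) (hdec u₁ u₂ hd1 hd2) x hx
  have hkey2 := key m n hm hn hnm α hα Ω hΩ (fun y => u₂ y - u₁ y)
    (h2.1.sub h1.1) (h2.2.sub h1.2)
    (hpdiff u₂ u₁ h2.1 h1.1 hp2 hp1) (hdec u₂ u₁ hd2 hd1) x hx
  have : u₁ x - u₂ x ≤ 0 := hkey1
  have : u₂ x - u₁ x ≤ 0 := hkey2
  show u₁ x = u₂ x
  linarith
end
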